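/- arXiv:1903.05548 — 12 statements merged into one kernel-verified Lean document; each statement's English description precedes it below -/
import Mathlib

section
/- For a partition λ = (λ₁ ≥ λ₂ ≥ ... ≥ λₙ ≥ 0), the Gelfand-Tsetlin polytope GT(λ) decomposes as the Minkowski sum GT(λ) = Σ_{k=1}^{n} (λₖ - λ_{k+1})·GT(1^k 0^{n-k}), where λ_{n+1} = 0 and c·P denotes the dilation of the polytope P by the scalar c. -/
/-!
Cut a pattern `x ∈ GT(λ)` into the horizontal slices `min(x, λₖ) - min(x, λₖ₊₁)`. The map
`t ↦ min(t, a) - min(t, b)` (`b ≤ a`) is monotone and vanishes at `0`, so it sends Gelfand-Tsetlin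
patterns to Gelfand-Tsetlin patterns, and on the antitone top row `λ` it gives
`(λₖ - λₖ₊₁) · 1^k 0^(n-k)`; the slices telescope back to `x`. Conversely, the defining inequalities
are linear and homogeneous in `(x, λ)`, so `GT(λ) + GT(μ) ⊆ GT(λ + μ)` and `c • GT(λ) = GT(c • λ)`
for `c ≥ 0` (for `c = 0` because `GT(0) = {0}` and `GT(1^k 0^(n-k))` is nonempty).
-/

open Pointwise

/-- The Gelfand-Tsetlin polytope of a partition `lam` with `n` parts, realized as a set of
triangular arrays `(x i j)` for `1 ≤ i ≤ j ≤ n` (extended by zero outside the triangle):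
the top row is `lam` and consecutive rows interlace. -/
def GTpoly (n : ℕ) (lam : ℕ → ℝ) : Set (ℕ → ℕ → ℝ) :=
  {x | (∀ i j, ¬(1 ≤ i ∧ i ≤ j ∧ j ≤ n) → x i j = 0) ∧
       (∀ i j, 1 ≤ i → i ≤ j → j ≤ n → 0 ≤ x i j) ∧
       (∀ j, 1 ≤ j → j ≤ n → x 1 j = lam j) ∧
       (∀ i j, 2 ≤ i → i ≤ j → j ≤ n → x (i-1) (j-1) ≥ x i j ∧ x i j ≥ x (i-1) j)}

open Finset

theorem Finset.sum_Icc_sub_succ {M : Type*} [AddCommGroup M] (f : ℕ → M) {m n : ℕ}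
    (h : m ≤ n + 1) : ∑ k ∈ Icc m n, (f k - f (k + 1)) = f m - f (n + 1) := by
  rw [← Ico_add_one_right_eq_Icc, ← neg_sub, ← sum_Ico_sub f h, ← sum_neg_distrib]
  simp only [neg_sub]

section GTpoly

variable {n : ℕ} {l l' : ℕ → ℝ} {x : ℕ → ℕ → ℝ}

theorem GTpoly_congr (h : ∀ j, 1 ≤ j → j ≤ n → l j = l' j) : GTpoly n l = GTpoly n l' := by
  ext x
  refine and_congr_right fun _ => and_congr_right fun _ => and_congr_left fun _ => ?_
  exact forall_congr' fun j => imp_congr_right fun h1 => imp_congr_right fun h2 => by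
    rw [h j h1 h2]

theorem nonneg_of_mem_GTpoly (hx : x ∈ GTpoly n l) (i j : ℕ) : 0 ≤ x i j := by
  by_cases h : 1 ≤ i ∧ i ≤ j ∧ j ≤ n
  · exact hx.2.1 i j h.1 h.2.1 h.2.2
  · exact (hx.1 i j h).ge

theorem le_topRow_of_mem_GTpoly (hx : x ∈ GTpoly n l) :
    ∀ i j, 1 ≤ i → i ≤ j → j ≤ n → x i j ≤ l (j + 1 - i) := by
  intro i
  induction i with
  | zero => intro j h; omega
  | succ i ih =>
    intro j h1 h2 h3
    rcases Nat.eq_zero_or_pos i with rfl | hi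
    · simp [hx.2.2.1 j h2 h3]
    · calc x (i + 1) j ≤ x i (j - 1) := by simpa using (hx.2.2.2 (i + 1) j (by omega) h2 h3).1
        _ ≤ l (j - 1 + 1 - i) := ih (j - 1) hi (by omega) (by omega)
        _ = l (j + 1 - (i + 1)) := by congr 1; omega

theorem le_of_mem_GTpoly (hl : AntitoneOn l (Set.Icc 1 n)) (hl1 : 0 ≤ l 1)
    (hx : x ∈ GTpoly n l) (i j : ℕ) : x i j ≤ l 1 := by
  by_cases h : 1 ≤ i ∧ i ≤ j ∧ j ≤ n
  · obtain ⟨h1, h2, h3⟩ := h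
    exact (le_topRow_of_mem_GTpoly hx i j h1 h2 h3).trans
      (hl ⟨le_rfl, by omega⟩ ⟨by omega, by omega⟩ (by omega))
  · rw [hx.1 i j h]; exact hl1

theorem GTpoly_zero : GTpoly n 0 = {0} := by
  refine Set.eq_singleton_iff_unique_mem.2 ⟨⟨fun _ _ _ => rfl, fun _ _ _ _ _ => le_rfl,
    fun _ _ _ => rfl, fun _ _ _ _ _ => ⟨le_rfl, le_rfl⟩⟩, fun x hx => ?_⟩
  ext i j
  exact le_antisymm (le_of_mem_GTpoly antitoneOn_const le_rfl hx i j) (nonneg_of_mem_GTpoly hx i j)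

theorem GTpoly_add_GTpoly_subset : GTpoly n l + GTpoly n l' ⊆ GTpoly n (l + l') := by
  rintro _ ⟨x, ⟨hx0, hxpos, hxtop, hxint⟩, y, ⟨hy0, hypos, hytop, hyint⟩, rfl⟩
  refine ⟨fun i j h => ?_, fun i j h1 h2 h3 => ?_, fun j h1 h2 => ?_, fun i j h1 h2 h3 => ?_⟩
  · simp [hx0 i j h, hy0 i j h]
  · exact add_nonneg (hxpos i j h1 h2 h3) (hypos i j h1 h2 h3)
  · simp [hxtop j h1 h2, hytop j h1 h2]
  · have := hxint i j h1 h2 h3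
    have := hyint i j h1 h2 h3
    simp only [Pi.add_apply]
    constructor <;> linarith

theorem smul_mem_GTpoly {c : ℝ} (hc : 0 ≤ c) (hx : x ∈ GTpoly n l) : c • x ∈ GTpoly n (c • l) := by
  obtain ⟨hx0, hxpos, hxtop, hxint⟩ := hx
  refine ⟨fun i j h => ?_, fun i j h1 h2 h3 => ?_, fun j h1 h2 => ?_, fun i j h1 h2 h3 => ?_⟩
  · simp [hx0 i j h]
  · exact mul_nonneg hc (hxpos i j h1 h2 h3)
  · simp [hxtop j h1 h2]
  · obtain ⟨h, h'⟩ := hxint i j h1 h2 h3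
    exact ⟨mul_le_mul_of_nonneg_left h hc, mul_le_mul_of_nonneg_left h' hc⟩

theorem smul_GTpoly {c : ℝ} (hc : 0 ≤ c) (hne : (GTpoly n l).Nonempty) :
    c • GTpoly n l = GTpoly n (c • l) := by
  rcases hc.eq_or_lt with rfl | hc
  · rw [Set.zero_smul_set hne, zero_smul, GTpoly_zero]; rfl
  refine (Set.smul_set_subset_iff.2 fun x hx => smul_mem_GTpoly hc.le hx).antisymm fun y hy => ?_
  refine ⟨c⁻¹ • y, ?_, smul_inv_smul₀ hc.ne' y⟩
  simpa [smul_smul, inv_mul_cancel₀ hc.ne'] using smul_mem_GTpoly (inv_nonneg.2 hc.le) hy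

theorem sum_GTpoly_subset {ι : Type*} (s : Finset ι) (l : ι → ℕ → ℝ) :
    ∑ k ∈ s, GTpoly n (l k) ⊆ GTpoly n (∑ k ∈ s, l k) := by
  classical
  induction s using Finset.induction_on with
  | empty => simpa [Set.zero_subset] using GTpoly_zero.ge
  | insert a s ha ih =>
    rw [sum_insert ha, sum_insert ha]
    exact (Set.add_subset_add_left ih).trans GTpoly_add_GTpoly_subset

theorem GTpoly_nonempty (hl : AntitoneOn l (Set.Icc 1 n)) (hl0 : ∀ j ∈ Set.Icc 1 n, 0 ≤ l j) :
    (GTpoly n l).Nonempty := by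
  refine ⟨fun i j => if 1 ≤ i ∧ i ≤ j ∧ j ≤ n then l j else 0,
    fun i j h => if_neg h, fun i j h1 h2 h3 => ?_, fun j h1 h2 => if_pos ⟨le_rfl, h1, h2⟩,
    fun i j h1 h2 h3 => ?_⟩
  · dsimp only
    rw [if_pos ⟨h1, h2, h3⟩]; exact hl0 j ⟨by omega, h3⟩
  · simp only [if_pos (show 1 ≤ i ∧ i ≤ j ∧ j ≤ n by omega),
      if_pos (show 1 ≤ i - 1 ∧ i - 1 ≤ j - 1 ∧ j - 1 ≤ n by omega),
      if_pos (show 1 ≤ i - 1 ∧ i - 1 ≤ j ∧ j ≤ n by omega)]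
    exact ⟨hl ⟨by omega, by omega⟩ ⟨by omega, h3⟩ (by omega), le_rfl⟩

theorem comp_mem_GTpoly {f : ℝ → ℝ} (hf : Monotone f) (hf0 : f 0 = 0) (hx : x ∈ GTpoly n l) :
    (fun i j => f (x i j)) ∈ GTpoly n (f ∘ l) := by
  obtain ⟨hx0, hxpos, hxtop, hxint⟩ := hx
  refine ⟨fun i j h => ?_, fun i j h1 h2 h3 => ?_, fun j h1 h2 => ?_, fun i j h1 h2 h3 => ?_⟩
  · simp [hx0 i j h, hf0]
  · exact hf0 ▸ hf (hxpos i j h1 h2 h3)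
  · simp [hxtop j h1 h2]
  · obtain ⟨h, h'⟩ := hxint i j h1 h2 h3
    exact ⟨hf h, hf h'⟩

end GTpoly

theorem monotone_min_sub_min {a b : ℝ} (hba : b ≤ a) :
    Monotone fun t : ℝ => min t a - min t b := by
  intro s t hst
  simp only [min_def]
  split_ifs <;> linarith

section Antitone

variable {n : ℕ} {l : ℕ → ℝ}

theorem min_sub_min_of_antitoneOn (hl : AntitoneOn l (Set.Icc 1 (n + 1))) {k j : ℕ}
    (hk : k ∈ Icc 1 n) (hj : j ∈ Set.Icc 1 (n + 1)) :
    min (l j) (l k) - min (l j) (l (k + 1)) = (l k - l (k + 1)) * if j ≤ k then 1 else 0 := by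
  obtain ⟨hk1, hkn⟩ := mem_Icc.1 hk
  obtain ⟨hj1, hjn⟩ := hj
  split_ifs with hjk
  · rw [min_eq_right (hl ⟨hj1, hjn⟩ ⟨hk1, by omega⟩ hjk),
      min_eq_right (hl ⟨hj1, hjn⟩ ⟨by omega, by omega⟩ (by omega)), mul_one]
  · rw [min_eq_left (hl ⟨hk1, by omega⟩ ⟨hj1, hjn⟩ (by omega)),
      min_eq_left (hl ⟨by omega, by omega⟩ ⟨hj1, hjn⟩ (by omega)), sub_self, mul_zero]

theorem sum_Icc_sub_mul_ite_le (l : ℕ → ℝ) {j : ℕ} (hj : j ∈ Set.Icc 1 (n + 1)) :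
    ∑ k ∈ Icc 1 n, (l k - l (k + 1)) * (if j ≤ k then 1 else 0) = l j - l (n + 1) := by
  obtain ⟨hj1, hjn⟩ := hj
  have hfilter : (Icc 1 n).filter (j ≤ ·) = Icc j n := by
    ext k; simp only [mem_filter, mem_Icc]; omega
  simp only [mul_ite, mul_one, mul_zero]
  rw [← sum_filter, hfilter, sum_Icc_sub_succ l hjn]

theorem sum_min_sub_min_eq_of_mem_GTpoly (hl : AntitoneOn l (Set.Icc 1 (n + 1)))
    (hl0 : l (n + 1) = 0) {x : ℕ → ℕ → ℝ} (hx : x ∈ GTpoly n l) :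
    ∑ k ∈ Icc 1 n, (fun i j => min (x i j) (l k) - min (x i j) (l (k + 1))) = x := by
  have hl1 : 0 ≤ l 1 :=
    hl0 ▸ hl (Set.left_mem_Icc.2 (by omega)) (Set.right_mem_Icc.2 (by omega)) (by omega)
  have hx_le := le_of_mem_GTpoly (hl.mono (Set.Icc_subset_Icc_right (by omega))) hl1 hx
  ext i j
  rw [Finset.sum_apply, Finset.sum_apply,
    sum_Icc_sub_succ (fun k => min (x i j) (l k)) (by omega), hl0, min_eq_left (hx_le i j),
    min_eq_right (nonneg_of_mem_GTpoly hx i j), sub_zero]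

end Antitone

theorem GTpoly_eq_sum_smul_GTpoly {n : ℕ} {l : ℕ → ℝ} (hl : AntitoneOn l (Set.Icc 1 (n + 1)))
    (hl0 : l (n + 1) = 0) :
    GTpoly n l =
      ∑ k ∈ Icc 1 n, (l k - l (k + 1)) • GTpoly n (fun j => if j ≤ k then (1 : ℝ) else 0) := by
  set ω : ℕ → ℕ → ℝ := fun k j => if j ≤ k then 1 else 0
  have hl_nonneg : ∀ j ∈ Set.Icc 1 (n + 1), 0 ≤ l j := fun j hj =>
    hl0 ▸ hl hj ⟨by omega, le_rfl⟩ hj.2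
  have hc : ∀ k ∈ Icc 1 n, 0 ≤ l k - l (k + 1) := fun k hk => by
    rw [mem_Icc] at hk
    exact sub_nonneg.2 (hl ⟨hk.1, by omega⟩ ⟨by omega, by omega⟩ (by omega))
  have hω : ∀ k, (GTpoly n (ω k)).Nonempty := fun k =>
    GTpoly_nonempty (fun a _ b _ hab => by dsimp only [ω]; split_ifs <;> first | omega | norm_num)
      (fun j _ => by dsimp only [ω]; split_ifs <;> norm_num)
  have htop : ∀ j, 1 ≤ j → j ≤ n → (∑ k ∈ Icc 1 n, (l k - l (k + 1)) • ω k) j = l j :=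
    fun j h1 h2 => by simpa [ω, hl0] using sum_Icc_sub_mul_ite_le (n := n) l ⟨h1, by omega⟩
  rw [sum_congr rfl fun k hk => smul_GTpoly (hc k hk) (hω k)]
  refine subset_antisymm (fun x hx => ?_) ((sum_GTpoly_subset _ _).trans (GTpoly_congr htop).le)
  rw [← sum_min_sub_min_eq_of_mem_GTpoly hl hl0 hx]
  refine Set.finsetSum_mem_finsetSum _ _ _ fun k hk => ?_
  obtain ⟨hk1, hkn⟩ := mem_Icc.1 hk
  rw [GTpoly_congr (l := (l k - l (k + 1)) • ω k)
    (l' := (fun t => min t (l k) - min t (l (k + 1))) ∘ l)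
    fun j h1 h2 => (min_sub_min_of_antitoneOn hl hk ⟨h1, by omega⟩).symm]
  refine comp_mem_GTpoly (monotone_min_sub_min (sub_nonneg.1 (hc k hk))) ?_ hx
  rw [min_eq_left (hl_nonneg k ⟨hk1, by omega⟩),
    min_eq_left (hl_nonneg (k + 1) ⟨by omega, by omega⟩), sub_zero]

theorem stmt0_general (n : ℕ) (lam : ℕ → ℤ)
    (hnonneg : ∀ k, 0 ≤ lam k)
    (hdec : ∀ k, 1 ≤ k → k < n → lam (k+1) ≤ lam k)
    (hzero : ∀ k, n < k → lam k = 0) :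
    GTpoly n (fun j => (lam j : ℝ)) =
      ∑ k ∈ Finset.Icc 1 n,
        ((lam k : ℝ) - (lam (k+1) : ℝ)) •
          GTpoly n (fun j => if j ≤ k then (1:ℝ) else 0) := by
  refine GTpoly_eq_sum_smul_GTpoly (antitoneOn_of_add_one_le Set.ordConnected_Icc ?_)
    (by simp [hzero (n + 1) n.lt_succ_self])
  intro k _ hk hk1
  rcases (show k ≤ n by simpa using hk1.2).lt_or_eq with hkn | rfl
  · exact_mod_cast hdec k hk.1 hkn
  · rw [hzero (k + 1) k.lt_succ_self]
    exact_mod_cast hnonneg k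

/-- `GT(λ) = ∑_{k=1}^n (λ_k - λ_{k+1}) · GT(1^k 0^{n-k})`. -/
theorem stmt0 (n : ℕ) (hn : 1 ≤ n) (lam : ℕ → ℤ)
    (hnonneg : ∀ k, 0 ≤ lam k)
    (hdec : ∀ k, 1 ≤ k → k < n → lam (k+1) ≤ lam k)
    (hzero : ∀ k, n < k → lam k = 0) :
    GTpoly n (fun j => (lam j : ℝ)) =
      ∑ k ∈ Finset.Icc 1 n,
        ((lam k : ℝ) - (lam (k+1) : ℝ)) •
          GTpoly n (fun j => if j ≤ k then (1:ℝ) else 0) :=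
  stmt0_general n lam hnonneg hdec hzero
end

section
/- If λ and μ are partitions with n parts, then the Minkowski sum of Gelfand-Tsetlin polytopes satisfies GT(λ) + GT(μ) = GT(λ + μ), where λ + μ denotes the componentwise sum. -/
/-!
The inclusion `⊆` holds entrywise. For `⊇`, split `x ∈ GT(λ + μ)` row by row: the top row of
`y` is `λ`, and `y (i+1) j = min (y i (j-1)) (y i j + (x (i+1) j - x i j))`, i.e. `y` takes the
increase of `x` down column `j` as far as its own interlacing allows and `z = x - y` takes the
rest. If the rows `y i` and `z i` are weakly decreasing, each inequality needed for `y (i+1)` and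
`z (i+1)` to interlace them is either one of the interlacing inequalities of `x` or this
monotonicity; and interlacing rows are again weakly decreasing, so the induction starts from the
decreasing rows `λ`, `μ`. Nonnegativity comes for free, since columns increase downwards.
-/

open Pointwise

section Interlacing

variable {α : Type*}

/-- The condition between rows `m` and `m + 1` of a Gelfand-Tsetlin pattern: `w` is indexed by
`m, …, n` and `w'` by `m + 1, …, n`. -/
def Interlaces [LE α] (m n : ℕ) (w w' : ℕ → α) : Prop :=
  ∀ j, m ≤ j → j < n → w' (j + 1) ≤ w j ∧ w (j + 1) ≤ w' (j + 1)

def RowAntitone [LE α] (m n : ℕ) (w : ℕ → α) : Prop :=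
  ∀ j, m ≤ j → j < n → w (j + 1) ≤ w j

variable {m n : ℕ} {v v' w w' : ℕ → α}

theorem Interlaces.congr [LE α] (h : Interlaces m n w w')
    (hv : ∀ j, m ≤ j → j ≤ n → v j = w j) (hv' : ∀ j, m < j → j ≤ n → v' j = w' j) :
    Interlaces m n v v' := by
  intro j hj hjn
  rw [hv j hj hjn.le, hv (j + 1) (by omega) hjn, hv' (j + 1) (by omega) hjn]
  exact h j hj hjn

theorem Interlaces.rowAntitone [Preorder α] (h : Interlaces m n w w') :
    RowAntitone (m + 1) n w' := by
  intro j hj hjn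
  obtain ⟨l, rfl⟩ := Nat.exists_eq_add_of_le' (show 1 ≤ j by omega)
  exact (h (l + 1) (by omega) hjn).1.trans (h l (by omega) (by omega)).2

theorem apply_one_le_of_forall_interlaces [Preorder α] {w : ℕ → ℕ → α}
    (h : ∀ m, 1 ≤ m → Interlaces m n (w m) (w (m + 1))) :
    ∀ m, 1 ≤ m → ∀ j, m ≤ j → j ≤ n → w 1 j ≤ w m j := by
  intro m hm
  induction m, hm using Nat.le_induction with
  | base => exact fun j _ _ => le_rfl
  | succ m hm ih =>
    intro j hj hjn
    obtain ⟨l, rfl⟩ := Nat.exists_eq_add_of_le' (show 1 ≤ j by omega)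
    exact (ih (l + 1) (by omega) hjn).trans (h m hm l (by omega) (by omega)).2

section OrderedGroup

variable [AddCommGroup α] [LinearOrder α] [IsOrderedAddMonoid α]

def splitRow (u u' v : ℕ → α) (j : ℕ) : α :=
  min (v (j - 1)) (v j + (u' j - u j))

theorem interlaces_splitRow {u u' : ℕ → α} (hu : Interlaces m n u u')
    (hv : RowAntitone m n v) (huv : RowAntitone m n (u - v)) :
    Interlaces m n v (splitRow u u' v) ∧ Interlaces m n (u - v) (u' - splitRow u u' v) := by
  constructor <;> intro j hj hjn <;>
    obtain ⟨hu₁, hu₂⟩ := hu j hj hjn <;>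
    have hv_j := hv j hj hjn <;>
    have huv_j := huv j hj hjn <;>
    simp only [splitRow, Nat.add_sub_cancel, Pi.sub_apply] at huv_j ⊢
  · exact ⟨min_le_left _ _, le_min hv_j (le_add_of_nonneg_right (sub_nonneg.2 hu₂))⟩
  · constructor
    · rw [sub_le_comm]
      exact le_min (by grind) (by grind)
    · rw [le_sub_comm]
      exact min_le_of_right_le (by grind)

/-- The splitting `y` of the proof idea. Row `0` is a dummy: patterns start at row `1`. -/
def lamPart (x : ℕ → ℕ → α) (lam : ℕ → α) : ℕ → ℕ → α
  | 0 => 0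
  | 1 => lam
  | i + 2 => splitRow (x (i + 1)) (x (i + 2)) (lamPart x lam (i + 1))

variable {x : ℕ → ℕ → α} {lam mu : ℕ → α}

theorem rowAntitone_lamPart (htop : ∀ j, 1 ≤ j → j ≤ n → x 1 j = lam j + mu j)
    (hlam : RowAntitone 1 n lam) (hmu : RowAntitone 1 n mu)
    (hx : ∀ m, 1 ≤ m → Interlaces m n (x m) (x (m + 1))) :
    ∀ m, 1 ≤ m → RowAntitone m n (lamPart x lam m) ∧ RowAntitone m n (x m - lamPart x lam m) := by
  intro m hm
  induction m, hm using Nat.le_induction with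
  | base =>
    refine ⟨hlam, fun j hj hjn => ?_⟩
    simpa [lamPart, htop j hj hjn.le, htop (j + 1) (by omega) hjn] using hmu j hj hjn
  | succ m hm ih =>
    obtain ⟨k, rfl⟩ := Nat.exists_eq_add_of_le' hm
    obtain ⟨hY, hZ⟩ := interlaces_splitRow (hx (k + 1) hm) ih.1 ih.2
    exact ⟨hY.rowAntitone, hZ.rowAntitone⟩

theorem interlaces_lamPart (htop : ∀ j, 1 ≤ j → j ≤ n → x 1 j = lam j + mu j)
    (hlam : RowAntitone 1 n lam) (hmu : RowAntitone 1 n mu)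
    (hx : ∀ m, 1 ≤ m → Interlaces m n (x m) (x (m + 1))) (m : ℕ) (hm : 1 ≤ m) :
    Interlaces m n (lamPart x lam m) (lamPart x lam (m + 1)) ∧
      Interlaces m n (x m - lamPart x lam m) (x (m + 1) - lamPart x lam (m + 1)) := by
  obtain ⟨k, rfl⟩ := Nat.exists_eq_add_of_le' hm
  have hrow := rowAntitone_lamPart htop hlam hmu hx (k + 1) hm
  exact interlaces_splitRow (hx (k + 1) hm) hrow.1 hrow.2

end OrderedGroup

end Interlacing

theorem forall_interlaces_iff {n : ℕ} {x : ℕ → ℕ → ℝ} :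
    (∀ i j, 2 ≤ i → i ≤ j → j ≤ n → x (i - 1) (j - 1) ≥ x i j ∧ x i j ≥ x (i - 1) j) ↔
      ∀ m, 1 ≤ m → Interlaces m n (x m) (x (m + 1)) := by
  constructor
  · intro h m hm j hj hjn
    simpa using h (m + 1) (j + 1) (by omega) (by omega) hjn
  · intro h i j hi hij hjn
    obtain ⟨m, rfl⟩ := Nat.exists_eq_add_of_le' (show 1 ≤ i by omega)
    obtain ⟨l, rfl⟩ := Nat.exists_eq_add_of_le' (show 1 ≤ j by omega)
    simpa using h m (by omega) l (by omega) hjn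

theorem mem_GTpoly_of_interlaces {n : ℕ} {lam : ℕ → ℝ} {x w : ℕ → ℕ → ℝ}
    (hx0 : ∀ i j, ¬(1 ≤ i ∧ i ≤ j ∧ j ≤ n) → x i j = 0)
    (hxw : ∀ i j, 1 ≤ i → i ≤ j → j ≤ n → x i j = w i j)
    (htop : ∀ j, 1 ≤ j → j ≤ n → w 1 j = lam j) (hlam : ∀ j, 1 ≤ j → j ≤ n → 0 ≤ lam j)
    (hw : ∀ m, 1 ≤ m → Interlaces m n (w m) (w (m + 1))) :
    x ∈ GTpoly n lam := by
  have hx : ∀ m, 1 ≤ m → Interlaces m n (x m) (x (m + 1)) := fun m hm =>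
    (hw m hm).congr (fun j hj hjn => hxw m j hm hj hjn)
      (fun j hj hjn => hxw (m + 1) j (by omega) hj hjn)
  have hxtop : ∀ j, 1 ≤ j → j ≤ n → x 1 j = lam j := fun j hj hjn =>
    (hxw 1 j le_rfl hj hjn).trans (htop j hj hjn)
  refine ⟨hx0, fun i j hi hij hjn => ?_, hxtop, forall_interlaces_iff.2 hx⟩
  calc 0 ≤ lam j := hlam j (hi.trans hij) hjn
    _ = x 1 j := (hxtop j (hi.trans hij) hjn).symm
    _ ≤ x i j := apply_one_le_of_forall_interlaces hx i hi j hij hjn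

theorem GTpoly_add_subset (n : ℕ) (lam mu : ℕ → ℝ) :
    GTpoly n lam + GTpoly n mu ⊆ GTpoly n (lam + mu) := by
  rintro _ ⟨x, ⟨hx0, hxnn, hxtop, hxint⟩, y, ⟨hy0, hynn, hytop, hyint⟩, rfl⟩
  refine ⟨fun i j h => ?_, fun i j hi hij hjn => ?_, fun j hj hjn => ?_,
    fun i j hi hij hjn => ?_⟩
  · simp [hx0 i j h, hy0 i j h]
  · exact add_nonneg (hxnn i j hi hij hjn) (hynn i j hi hij hjn)
  · simp [hxtop j hj hjn, hytop j hj hjn]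
  · obtain ⟨hx₁, hx₂⟩ := hxint i j hi hij hjn
    obtain ⟨hy₁, hy₂⟩ := hyint i j hi hij hjn
    exact ⟨add_le_add hx₁ hy₁, add_le_add hx₂ hy₂⟩

theorem subset_GTpoly_add {n : ℕ} {lam mu : ℕ → ℝ}
    (hlam₀ : ∀ j, 1 ≤ j → j ≤ n → 0 ≤ lam j) (hmu₀ : ∀ j, 1 ≤ j → j ≤ n → 0 ≤ mu j)
    (hlam : RowAntitone 1 n lam) (hmu : RowAntitone 1 n mu) :
    GTpoly n (lam + mu) ⊆ GTpoly n lam + GTpoly n mu := by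
  rintro x ⟨hx0, -, hxtop, hxint⟩
  have hsplit := interlaces_lamPart hxtop hlam hmu (forall_interlaces_iff.1 hxint)
  set y : ℕ → ℕ → ℝ := fun i j => if 1 ≤ i ∧ i ≤ j ∧ j ≤ n then lamPart x lam i j else 0
  refine ⟨y, ?_, x - y, ?_, add_sub_cancel y x⟩
  · exact mem_GTpoly_of_interlaces (fun i j h => if_neg h)
      (fun i j hi hij hjn => if_pos ⟨hi, hij, hjn⟩) (fun j _ _ => rfl) hlam₀
      (fun m hm => (hsplit m hm).1)
  · refine mem_GTpoly_of_interlaces (w := fun i => x i - lamPart x lam i) (fun i j h => ?_)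
      (fun i j hi hij hjn => ?_) (fun j hj hjn => ?_) hmu₀ (fun m hm => (hsplit m hm).2)
    · simp [y, hx0 i j h, h]
    · simp [y, hi, hij, hjn]
    · simp [lamPart, hxtop j hj hjn]

theorem GTpoly_add {n : ℕ} {lam mu : ℕ → ℝ}
    (hlam₀ : ∀ j, 1 ≤ j → j ≤ n → 0 ≤ lam j) (hmu₀ : ∀ j, 1 ≤ j → j ≤ n → 0 ≤ mu j)
    (hlam : RowAntitone 1 n lam) (hmu : RowAntitone 1 n mu) :
    GTpoly n lam + GTpoly n mu = GTpoly n (lam + mu) :=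
  (GTpoly_add_subset n lam mu).antisymm (subset_GTpoly_add hlam₀ hmu₀ hlam hmu)

theorem stmt1_general (n : ℕ) (lam mu : ℕ → ℤ)
    (hlnn : ∀ k, 0 ≤ lam k) (hmnn : ∀ k, 0 ≤ mu k)
    (hldec : ∀ k, 1 ≤ k → k < n → lam (k+1) ≤ lam k)
    (hmdec : ∀ k, 1 ≤ k → k < n → mu (k+1) ≤ mu k) :
    GTpoly n (fun j => (lam j : ℝ)) + GTpoly n (fun j => (mu j : ℝ)) =
      GTpoly n (fun j => ((lam j + mu j : ℤ) : ℝ)) := by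
  push_cast
  exact GTpoly_add (fun j _ _ => Int.cast_nonneg (hlnn j)) (fun j _ _ => Int.cast_nonneg (hmnn j))
    (fun k hk hkn => Int.cast_le.2 (hldec k hk hkn))
    (fun k hk hkn => Int.cast_le.2 (hmdec k hk hkn))

/-- For partitions `λ`, `μ` with `n` parts, `GT(λ) + GT(μ) = GT(λ + μ)` (Minkowski sum). -/
theorem stmt1 (n : ℕ) (hn : 1 ≤ n) (lam mu : ℕ → ℤ)
    (hlnn : ∀ k, 0 ≤ lam k) (hmnn : ∀ k, 0 ≤ mu k)
    (hldec : ∀ k, 1 ≤ k → k < n → lam (k+1) ≤ lam k)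
    (hmdec : ∀ k, 1 ≤ k → k < n → mu (k+1) ≤ mu k) :
    GTpoly n (fun j => (lam j : ℝ)) + GTpoly n (fun j => (mu j : ℝ)) =
      GTpoly n (fun j => ((lam j + mu j : ℤ) : ℝ)) :=
  stmt1_general n lam mu hlnn hmnn hldec hmdec
end

section
/- Let G be a directed acyclic connected graph on [n+1] and a₁,...,aₙ,b₁,...,bₙ nonnegative reals. Then F_G(a₁,...,aₙ,-Σaᵢ) + F_G(b₁,...,bₙ,-Σbᵢ) = F_G(a₁+b₁,...,aₙ+bₙ,-Σ(aᵢ+bᵢ)), where + on the left denotes Minkowski sum. -/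
/-!
One inclusion is linearity of the conservation equations. For the other, split a flow `x` with
netflow `a + b` proportionally: the mass `a v + b v + (inflow of x at v)` passing through `v`
contains the share `a v + (a-parts of the incoming edges)`, and the ratio `r v` of the two is the
fraction of every outgoing edge declared to be its `a`-part. Since edges increase the vertex
number, `r` is defined by recursion on vertices, and `x e * r e.1`, `x e * (1 - r e.1)` are flows
with netflows `a` and `b`.
-/

open Pointwise

/-- The flow polytope of a directed graph `E` on vertex set `[n+1]` with netflow `a` at the
vertices `1,…,n` (the netflow at vertex `n+1` is implied). -/
def FlowPoly (n : ℕ) (E : Finset (ℕ × ℕ)) (a : ℕ → ℝ) : Set (ℕ × ℕ → ℝ) :=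
  {f | (∀ e, e ∉ E → f e = 0) ∧ (∀ e ∈ E, 0 ≤ f e) ∧
    ∀ v, 1 ≤ v → v ≤ n →
      (∑ e ∈ E.filter (fun e => e.2 = v), f e) + a v =
        ∑ e ∈ E.filter (fun e => e.1 = v), f e}

open Finset

theorem flowPoly_add_flowPoly_subset (n : ℕ) (E : Finset (ℕ × ℕ)) (a b : ℕ → ℝ) :
    FlowPoly n E a + FlowPoly n E b ⊆ FlowPoly n E (fun v => a v + b v) := by
  rintro _ ⟨f, ⟨hf0, hf_nonneg, hf⟩, g, ⟨hg0, hg_nonneg, hg⟩, rfl⟩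
  refine ⟨fun e he => by simp [hf0 e he, hg0 e he],
    fun e he => add_nonneg (hf_nonneg e he) (hg_nonneg e he), fun v h1 h2 => ?_⟩
  simp only [Pi.add_apply, sum_add_distrib]
  linarith [hf v h1 h2, hg v h1 h2]

theorem sub_mem_flowPoly {n : ℕ} {E : Finset (ℕ × ℕ)} {a b : ℕ → ℝ} {x f : ℕ × ℕ → ℝ}
    (hx : x ∈ FlowPoly n E (fun v => a v + b v)) (hf : f ∈ FlowPoly n E a)
    (hfx : ∀ e ∈ E, f e ≤ x e) : x - f ∈ FlowPoly n E b := by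
  obtain ⟨hx0, -, hx⟩ := hx
  obtain ⟨hf0, -, hf⟩ := hf
  refine ⟨fun e he => by simp [hx0 e he, hf0 e he], fun e he => sub_nonneg.2 (hfx e he),
    fun v h1 h2 => ?_⟩
  simp only [Pi.sub_apply, sum_sub_distrib]
  linarith [hx v h1 h2, hf v h1 h2]

section Split

variable (E : Finset (ℕ × ℕ)) (x : ℕ × ℕ → ℝ) (a b : ℕ → ℝ)

/-- Edges `e` with `¬ e.1 < e.2` are ignored so that the recursion terminates; a topologically
numbered graph has none. -/
noncomputable def splitRatio (u : ℕ) : ℝ :=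
  (a u + ∑ e ∈ E.filter (fun e => e.2 = u), if e.1 < u then x e * splitRatio e.1 else 0) /
    (a u + b u + ∑ e ∈ E.filter (fun e => e.2 = u), x e)
termination_by u

theorem splitRatio_eq (hE : ∀ e ∈ E, e.1 < e.2) (u : ℕ) :
    splitRatio E x a b u =
      (a u + ∑ e ∈ E.filter (fun e => e.2 = u), x e * splitRatio E x a b e.1) /
        (a u + b u + ∑ e ∈ E.filter (fun e => e.2 = u), x e) := by
  rw [splitRatio]
  congr 2
  refine sum_congr rfl fun e he => if_pos ?_
  obtain ⟨heE, rfl⟩ := mem_filter.1 he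
  exact hE e heE

variable {E x a b}

theorem splitRatio_mem_Icc (hE : ∀ e ∈ E, e.1 < e.2) (hx : ∀ e ∈ E, 0 ≤ x e)
    (ha : ∀ i, 0 ≤ a i) (hb : ∀ i, 0 ≤ b i) (u : ℕ) : splitRatio E x a b u ∈ Set.Icc 0 1 := by
  induction u using Nat.strong_induction_on with
  | _ u ih =>
    have hterm : ∀ e ∈ E.filter (fun e => e.2 = u),
        0 ≤ x e * splitRatio E x a b e.1 ∧ x e * splitRatio E x a b e.1 ≤ x e := by
      intro e he
      obtain ⟨heE, rfl⟩ := mem_filter.1 he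
      obtain ⟨h0, h1⟩ := ih e.1 (hE e heE)
      exact ⟨mul_nonneg (hx e heE) h0, mul_le_of_le_one_right (hx e heE) h1⟩
    have hnum : 0 ≤ a u + ∑ e ∈ E.filter (fun e => e.2 = u), x e * splitRatio E x a b e.1 :=
      add_nonneg (ha u) (sum_nonneg fun e he => (hterm e he).1)
    have hle : a u + ∑ e ∈ E.filter (fun e => e.2 = u), x e * splitRatio E x a b e.1 ≤
        a u + b u + ∑ e ∈ E.filter (fun e => e.2 = u), x e := by
      linarith [hb u, sum_le_sum fun e he => (hterm e he).2]
    rw [splitRatio_eq E x a b hE]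
    exact ⟨div_nonneg hnum (hnum.trans hle), div_le_one_of_le₀ hle (hnum.trans hle)⟩

theorem splitFlow_mem_flowPoly {n : ℕ} (hE : ∀ e ∈ E, e.1 < e.2)
    (hx : x ∈ FlowPoly n E (fun v => a v + b v)) (ha : ∀ i, 0 ≤ a i) (hb : ∀ i, 0 ≤ b i) :
    (fun e => x e * splitRatio E x a b e.1) ∈ FlowPoly n E a := by
  obtain ⟨hx0, hx_nonneg, hx⟩ := hx
  have hr := splitRatio_mem_Icc hE hx_nonneg ha hb
  refine ⟨fun e he => by simp [hx0 e he], fun e he => mul_nonneg (hx_nonneg e he) (hr e.1).1,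
    fun v h1 h2 => ?_⟩
  set inflow := ∑ e ∈ E.filter (fun e => e.2 = v), x e
  set splitInflow := ∑ e ∈ E.filter (fun e => e.2 = v), x e * splitRatio E x a b e.1
  have hsplit_le : splitInflow ≤ inflow := sum_le_sum fun e he =>
    mul_le_of_le_one_right (hx_nonneg e (mem_filter.1 he).1) (hr e.1).2
  have hsplit_nonneg : 0 ≤ splitInflow := sum_nonneg fun e he =>
    mul_nonneg (hx_nonneg e (mem_filter.1 he).1) (hr e.1).1
  calc splitInflow + a v
      = (a v + splitInflow) / (a v + b v + inflow) * (a v + b v + inflow) := by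
        rw [div_mul_cancel_of_imp fun h => by linarith [ha v, hb v]]; ring
    _ = splitRatio E x a b v * ∑ e ∈ E.filter (fun e => e.1 = v), x e := by
        rw [splitRatio_eq E x a b hE, ← hx v h1 h2]; ring
    _ = ∑ e ∈ E.filter (fun e => e.1 = v), x e * splitRatio E x a b e.1 := by
        rw [mul_sum]
        exact sum_congr rfl fun e he => by rw [(mem_filter.1 he).2, mul_comm]

end Split

theorem flowPoly_subset_add_flowPoly {n : ℕ} {E : Finset (ℕ × ℕ)} {a b : ℕ → ℝ}
    (hE : ∀ e ∈ E, e.1 < e.2) (ha : ∀ i, 0 ≤ a i) (hb : ∀ i, 0 ≤ b i) :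
    FlowPoly n E (fun v => a v + b v) ⊆ FlowPoly n E a + FlowPoly n E b := by
  intro x hx
  have hf := splitFlow_mem_flowPoly hE hx ha hb
  have hfx : ∀ e ∈ E, x e * splitRatio E x a b e.1 ≤ x e := fun e he =>
    mul_le_of_le_one_right (hx.2.1 e he) (splitRatio_mem_Icc hE hx.2.1 ha hb e.1).2
  exact ⟨_, hf, _, sub_mem_flowPoly hx hf hfx, add_sub_cancel _ _⟩

theorem stmt3_general (n : ℕ) (E : Finset (ℕ × ℕ))
    (hE : ∀ e ∈ E, 1 ≤ e.1 ∧ e.1 < e.2 ∧ e.2 ≤ n + 1)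
    (a b : ℕ → ℝ) (ha : ∀ i, 0 ≤ a i) (hb : ∀ i, 0 ≤ b i) :
    FlowPoly n E a + FlowPoly n E b = FlowPoly n E (fun v => a v + b v) :=
  (flowPoly_add_flowPoly_subset n E a b).antisymm
    (flowPoly_subset_add_flowPoly (fun e he => (hE e he).2.1) ha hb)

/-- For a connected DAG `G` on `[n+1]` and nonnegative `a₁,…,aₙ,b₁,…,bₙ`:
`F_G(a) + F_G(b) = F_G(a+b)` (Minkowski sum on the left). -/
theorem stmt3 (n : ℕ) (hn : 1 ≤ n) (E : Finset (ℕ × ℕ))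
    (hE : ∀ e ∈ E, 1 ≤ e.1 ∧ e.1 < e.2 ∧ e.2 ≤ n + 1)
    (hconn : ∀ S : Finset ℕ, S ⊆ Finset.Icc 1 (n+1) → S.Nonempty → S ≠ Finset.Icc 1 (n+1) →
      ∃ e ∈ E, (e.1 ∈ S ∧ e.2 ∉ S) ∨ (e.1 ∉ S ∧ e.2 ∈ S))
    (a b : ℕ → ℝ) (ha : ∀ i, 0 ≤ a i) (hb : ∀ i, 0 ≤ b i) :
    FlowPoly n E a + FlowPoly n E b = FlowPoly n E (fun v => a v + b v) :=
  stmt3_general n E hE a b ha hb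
end

section
/- Fix nonnegative integers N₁, N₂ and integers μ₁ ≤ ν₁, ..., μₖ ≤ νₖ with Σᵢ(μᵢ + νᵢ) ≤ N₁ + N₂. Define the Laurent polynomial f(x₁,x₂) = Σ_{c₁=μ₁}^{ν₁} ··· Σ_{cₖ=μₖ}^{νₖ} x₁^{N₁-c₁-···-cₖ} x₂^{c₁+···+cₖ-N₂}. Then applying the Demazure operator π₁ gives π₁f(x₁,x₂) = Σ_{c₁=μ₁}^{ν₁} ··· Σ_{cₖ=μₖ}^{νₖ} Σ_{c_{k+1}=0}^{ν_{k+1}} x₁^{N₁-c₁-···-c_{k+1}} x₂^{c₁+···+c_{k+1}-N₂}, where ν_{k+1} = N₁+N₂ - Σ_{i=1}^k(μᵢ+νᵢ). -/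
/-! Multiplying by `x₁ - x₂`, the inner sum over `c'` telescopes, for `S = ∑ cᵢ` and
`M = N₁ + N₂ - ∑ (μᵢ + νᵢ) ≥ 0`, to `x₁^(N₁-S+1) x₂^(S-N₂) - x₁^(N₁-S-M) x₂^(S-N₂+M+1)`.
Summed over the box `μ ≤ c ≤ ν`, the first terms give `x₁ f(x₁,x₂)`; the reflection
`c ↦ μ + ν - c` of the box sends `S` to `∑ (μᵢ + νᵢ) - S` and turns the second terms into
those of `x₂ f(x₂,x₁)`. -/

open Finset

theorem Finset.sum_Icc_reflect {α M : Type*} [AddCommGroup α] [PartialOrder α]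
    [IsOrderedAddMonoid α] [LocallyFiniteOrder α] [AddCommMonoid M] (a b : α) (g : α → M) :
    ∑ c ∈ Icc a b, g (a + b - c) = ∑ c ∈ Icc a b, g c := by
  have hmaps : ∀ c ∈ Icc a b, a + b - c ∈ Icc a b := by
    intro c hc
    rw [mem_Icc] at hc ⊢
    constructor
    · simpa [le_sub_iff_add_le, add_comm a] using hc.2
    · simpa [sub_le_iff_le_add, add_comm b] using hc.1
  exact sum_nbij' (a + b - ·) (a + b - ·) hmaps hmaps (by simp) (by simp) (by simp)

theorem sub_mul_zpow_mul_zpow {K : Type*} [Field K] {x y : K} (hx : x ≠ 0) (hy : y ≠ 0) (a b : ℤ) :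
    (x - y) * (x ^ a * y ^ b) = x ^ (a + 1) * y ^ b - x ^ a * y ^ (b + 1) := by
  rw [zpow_add_one₀ hx, zpow_add_one₀ hy]; ring

theorem sub_mul_sum_Icc_zpow {K : Type*} [Field K] {x y : K} (hx : x ≠ 0) (hy : y ≠ 0)
    (a b : ℤ) {M : ℤ} (hM : 0 ≤ M) :
    (x - y) * ∑ j ∈ Icc 0 M, x ^ (a - j) * y ^ (b + j) =
      x ^ (a + 1) * y ^ b - x ^ (a - M) * y ^ (b + M + 1) := by
  induction M, hM using Int.leInduction with
  | base => simpa using sub_mul_zpow_mul_zpow hx hy a b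
  | succ M _ ih =>
    rw [← insert_Icc_right_eq_Icc_add_one (by omega), sum_insert (by simp), mul_add, ih,
      sub_mul_zpow_mul_zpow hx hy, show a - (M + 1) + 1 = a - M by ring,
      show b + (M + 1) = b + M + 1 by ring]
    abel

theorem stmt4_general (k N₁ N₂ : ℕ) (μ ν : Fin k → ℤ)
    (hsum : (∑ i, (μ i + ν i)) ≤ (N₁ : ℤ) + (N₂ : ℤ))
    (f : ℝ → ℝ → ℝ)
    (hf : ∀ x₁ x₂ : ℝ, f x₁ x₂ = ∑ c ∈ Finset.Icc μ ν,
      x₁ ^ ((N₁ : ℤ) - ∑ i, c i) * x₂ ^ ((∑ i, c i) - (N₂ : ℤ)))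
    (x₁ x₂ : ℝ) (h1 : x₁ ≠ 0) (h2 : x₂ ≠ 0) (h12 : x₁ ≠ x₂) :
    (x₁ * f x₁ x₂ - x₂ * f x₂ x₁) / (x₁ - x₂) =
      ∑ c ∈ Finset.Icc μ ν,
        ∑ c' ∈ Finset.Icc (0 : ℤ) ((N₁ : ℤ) + (N₂ : ℤ) - ∑ i, (μ i + ν i)),
          x₁ ^ ((N₁ : ℤ) - (∑ i, c i) - c') * x₂ ^ ((∑ i, c i) + c' - (N₂ : ℤ)) := by
  set T := ∑ i, (μ i + ν i)
  set M := (N₁ : ℤ) + N₂ - T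
  have telescope (c : Fin k → ℤ) :
      (x₁ - x₂) * ∑ c' ∈ Icc 0 M, x₁ ^ (N₁ - ∑ i, c i - c') * x₂ ^ (∑ i, c i + c' - N₂) =
        x₁ ^ (N₁ - ∑ i, c i + 1) * x₂ ^ (∑ i, c i - N₂) -
          x₁ ^ (N₁ - ∑ i, c i - M) * x₂ ^ (∑ i, c i - N₂ + M + 1) := by
    rw [← sub_mul_sum_Icc_zpow h1 h2 _ _ (by omega)]
    congr 1
    exact sum_congr rfl fun c' _ => by ring_nf
  have reflect : ∑ c ∈ Icc μ ν, x₁ ^ (N₁ - ∑ i, c i - M) * x₂ ^ (∑ i, c i - N₂ + M + 1) =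
      x₂ * ∑ c ∈ Icc μ ν, x₂ ^ (N₁ - ∑ i, c i) * x₁ ^ (∑ i, c i - N₂) := by
    rw [mul_sum, ← sum_Icc_reflect μ ν]
    refine sum_congr rfl fun c _ => ?_
    have hsum_reflect : ∑ i, (μ + ν - c) i = T - ∑ i, c i := by
      simp [T, sum_sub_distrib]
    rw [hsum_reflect, show N₁ - (T - ∑ i, c i) - M = ∑ i, c i - N₂ by omega,
      show T - ∑ i, c i - N₂ + M + 1 = N₁ - ∑ i, c i + 1 by omega, zpow_add_one₀ h2]
    ring
  rw [div_eq_iff (sub_ne_zero.2 h12), mul_comm _ (x₁ - x₂), mul_sum]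
  simp_rw [telescope]
  rw [sum_sub_distrib, reflect, hf, hf, mul_sum]
  congr 1
  exact sum_congr rfl fun c _ => by rw [zpow_add_one₀ h1]; ring

/-- Key Demazure-operator calculation: with
`f(x₁,x₂) = ∑_{μ ≤ c ≤ ν} x₁^{N₁ - Σcᵢ} x₂^{Σcᵢ - N₂}`, applying
`π₁f = (x₁ f - x₂ s₁f)/(x₁ - x₂)` appends one more summation variable
`0 ≤ c_{k+1} ≤ ν_{k+1} := N₁ + N₂ - Σ(μᵢ + νᵢ)`.  (Stated as an identity of functions
at all points with `x₁, x₂ ≠ 0`, `x₁ ≠ x₂`, which determines the Laurent polynomials.) -/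
theorem stmt4 (k N₁ N₂ : ℕ) (μ ν : Fin k → ℤ) (hμν : ∀ i, μ i ≤ ν i)
    (hsum : (∑ i, (μ i + ν i)) ≤ (N₁ : ℤ) + (N₂ : ℤ))
    (f : ℝ → ℝ → ℝ)
    (hf : ∀ x₁ x₂ : ℝ, f x₁ x₂ = ∑ c ∈ Finset.Icc μ ν,
      x₁ ^ ((N₁ : ℤ) - ∑ i, c i) * x₂ ^ ((∑ i, c i) - (N₂ : ℤ)))
    (x₁ x₂ : ℝ) (h1 : x₁ ≠ 0) (h2 : x₂ ≠ 0) (h12 : x₁ ≠ x₂) :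
    (x₁ * f x₁ x₂ - x₂ * f x₂ x₁) / (x₁ - x₂) =
      ∑ c ∈ Finset.Icc μ ν,
        ∑ c' ∈ Finset.Icc (0 : ℤ) ((N₁ : ℤ) + (N₂ : ℤ) - ∑ i, (μ i + ν i)),
          x₁ ^ ((N₁ : ℤ) - (∑ i, c i) - c') * x₂ ^ ((∑ i, c i) + c' - (N₂ : ℤ)) :=
  stmt4_general k N₁ N₂ μ ν hsum f hf x₁ x₂ h1 h2 h12
end

section
/- With f as in Lemma (Demazure key calculation): f(x₁,x₂) = (x₁/x₂)^{ν_{k+1}} · f(x₂,x₁), where ν_{k+1} = N₁+N₂ - Σ_{i=1}^k(μᵢ+νᵢ). That is, reversing the order of summation shows f satisfies the quasi-symmetry f = (x₁/x₂)^{ν_{k+1}} · s₁f. -/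
/-!
The reflection `c ↦ μ + ν - c` maps the box `Icc μ ν` onto itself and sends `∑ cᵢ` to
`∑ (μᵢ + νᵢ) - ∑ cᵢ`; after this substitution the sums for `f x₂ x₁` and `f x₁ x₂` agree term by
term up to the factor `(x₁ / x₂) ^ ν_{k+1}`.
-/

open Finset

namespace Finset

variable {α M : Type*} [AddCommGroup α] [PartialOrder α] [IsOrderedAddMonoid α]
  [LocallyFiniteOrder α] {a b c : α}

lemma add_sub_mem_Icc_iff : a + b - c ∈ Icc a b ↔ c ∈ Icc a b := by
  simp only [mem_Icc, le_sub_iff_add_le, sub_le_iff_le_add, add_comm a, add_le_add_iff_left,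
    add_le_add_iff_right]
  exact And.comm

lemma sum_Icc_reflect_s5 [AddCommMonoid M] (f : α → M) :
    ∑ c ∈ Icc a b, f (a + b - c) = ∑ c ∈ Icc a b, f c :=
  sum_equiv (Equiv.subLeft (a + b)) (fun _ => add_sub_mem_Icc_iff.symm) fun _ _ => rfl

end Finset

lemma zpow_sub_mul_zpow_sub_eq_div_zpow_mul {K : Type*} [Field K] {x y : K}
    (hx : x ≠ 0) (hy : y ≠ 0) (N₁ N₂ S T : ℤ) :
    x ^ (N₁ - (T - S)) * y ^ (T - S - N₂) =
      (x / y) ^ (N₁ + N₂ - T) * (y ^ (N₁ - S) * x ^ (S - N₂)) := by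
  calc x ^ (N₁ - (T - S)) * y ^ (T - S - N₂)
      = x ^ ((N₁ + N₂ - T) + (S - N₂)) * y ^ ((N₁ - S) - (N₁ + N₂ - T)) := by ring_nf
    _ = _ := by rw [zpow_add₀ hx, zpow_sub₀ hy, div_zpow]; ring

theorem stmt5_general (k N₁ N₂ : ℕ) (μ ν : Fin k → ℤ)
    (f : ℝ → ℝ → ℝ)
    (hf : ∀ x₁ x₂ : ℝ, f x₁ x₂ = ∑ c ∈ Finset.Icc μ ν,
      x₁ ^ ((N₁ : ℤ) - ∑ i, c i) * x₂ ^ ((∑ i, c i) - (N₂ : ℤ)))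
    (x₁ x₂ : ℝ) (h1 : x₁ ≠ 0) (h2 : x₂ ≠ 0) :
    f x₁ x₂ = (x₁ / x₂) ^ ((N₁ : ℤ) + (N₂ : ℤ) - ∑ i, (μ i + ν i)) * f x₂ x₁ := by
  rw [hf, hf, ← sum_Icc_reflect_s5, mul_sum]
  refine sum_congr rfl fun c _ => ?_
  have hS : ∑ i, (μ + ν - c) i = ∑ i, (μ i + ν i) - ∑ i, c i := by
    simp only [Pi.sub_apply, Pi.add_apply, sum_sub_distrib]
  rw [hS]
  exact zpow_sub_mul_zpow_sub_eq_div_zpow_mul h1 h2 _ _ _ _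

/-- Quasi-symmetry of the key sum: with
`f(x₁,x₂) = ∑_{μ ≤ c ≤ ν} x₁^{N₁ - Σcᵢ} x₂^{Σcᵢ - N₂}`, reversing the summation order gives
`f = (x₁/x₂)^{ν_{k+1}} · s₁f` where `ν_{k+1} = N₁ + N₂ - Σ(μᵢ + νᵢ)`. -/
theorem stmt5 (k N₁ N₂ : ℕ) (μ ν : Fin k → ℤ) (hμν : ∀ i, μ i ≤ ν i)
    (hsum : (∑ i, (μ i + ν i)) ≤ (N₁ : ℤ) + (N₂ : ℤ))
    (f : ℝ → ℝ → ℝ)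
    (hf : ∀ x₁ x₂ : ℝ, f x₁ x₂ = ∑ c ∈ Finset.Icc μ ν,
      x₁ ^ ((N₁ : ℤ) - ∑ i, c i) * x₂ ^ ((∑ i, c i) - (N₂ : ℤ)))
    (x₁ x₂ : ℝ) (h1 : x₁ ≠ 0) (h2 : x₂ ≠ 0) :
    f x₁ x₂ = (x₁ / x₂) ^ ((N₁ : ℤ) + (N₂ : ℤ) - ∑ i, (μ i + ν i)) * f x₂ x₁ :=
  stmt5_general k N₁ N₂ μ ν f hf x₁ x₂ h1 h2
end

section
/- For a partition λ with n parts, let f ∈ F_{G_λ} correspond to the Gelfand-Tsetlin pattern P_f ∈ GT(λ) under the integral equivalence. Then wt(P_f) = gwt(f) + λₙ·𝟙ₙ, where 𝟙ₙ is the all-ones vector in ℝⁿ. -/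
/-!
Summing flow conservation over a set of vertices that no edge enters equates its total netflow
with the flow on the edges leaving it. Only the `b`-edges of column `m` leave the columns `j ≤ m`,
so their flow is `λ₁ - λ_m`. The edges leaving the rows `i ≤ m + 1` are those out of row `m + 1`,
so `gwt(f)_m` plus the `b`-flow out of row `m + 1` is `λ₁ - λ_n`. Since
`x_{m+1,j} - x_{m,j} = b_{m+1,j}`, the weight `wt(P_f)_m` telescopes to `λ_m` plus the first of
these `b`-flows minus the second, that is, to `λ_n + gwt(f)_m`.
-/

/-- Index pairs `(i,j)` of the "a"-edges `(v_{ij}, v_{i+1,j})` of `G_λ`: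
`2 ≤ i ≤ j ≤ n`, together with `j = n+1`, `3 ≤ i ≤ n+1`. -/
def aPairs (n : ℕ) : Finset (ℕ × ℕ) :=
  (Finset.Icc 2 (n+1) ×ˢ Finset.Icc 2 (n+1)).filter
    (fun p => (p.1 ≤ p.2 ∧ p.2 ≤ n) ∨ (p.2 = n+1 ∧ 3 ≤ p.1))

/-- Index pairs `(i,j)` of the "b"-edges `(v_{ij}, v_{i+1,j+1})` of `G_λ`:
`2 ≤ i ≤ j ≤ n`, together with `j = i-1`, `3 ≤ i ≤ n+1`. -/
def bPairs (n : ℕ) : Finset (ℕ × ℕ) :=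
  (Finset.Icc 2 (n+1) ×ˢ Finset.Icc 1 n).filter
    (fun p => (p.1 ≤ p.2 ∧ p.2 ≤ n) ∨ (p.2 + 1 = p.1 ∧ 3 ≤ p.1))

/-- Edge set of the flow network `G_λ` (vertices are labelled by pairs `(i,j)`). -/
def Gedges (n : ℕ) : Finset ((ℕ × ℕ) × (ℕ × ℕ)) :=
  (aPairs n).image (fun p => ((p.1, p.2), (p.1 + 1, p.2))) ∪
  (bPairs n).image (fun p => ((p.1, p.2), (p.1 + 1, p.2 + 1)))

/-- Vertex set of the flow network `G_λ`. -/
def Gverts (n : ℕ) : Finset (ℕ × ℕ) :=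
  ((Finset.Icc 2 n ×ˢ Finset.Icc 2 n).filter (fun p => p.1 ≤ p.2)) ∪
  ((Finset.Icc 3 (n+2)).image (fun i => (i, i-1))) ∪
  ((Finset.Icc 3 (n+1)).image (fun i => (i, n+1)))

/-- Netflow vector of `G_λ`: `λ_{j-1} - λ_j` at `v_{2j}` for `2 ≤ j ≤ n`,
`λ_n - λ_1` at `v_{n+2,n+1}`, and `0` elsewhere. -/
def Gnet (n : ℕ) (lam : ℕ → ℝ) : ℕ × ℕ → ℝ :=
  fun v => if v.1 = 2 ∧ 2 ≤ v.2 ∧ v.2 ≤ n then lam (v.2 - 1) - lam v.2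
    else if v = (n+2, n+1) then lam n - lam 1 else 0

/-- The flow polytope `F_{G_λ}`: nonnegative flows on the edges of `G_λ` satisfying
conservation of flow with the netflow `Gnet`. -/
def FlowSetG (n : ℕ) (lam : ℕ → ℝ) : Set (((ℕ × ℕ) × (ℕ × ℕ)) → ℝ) :=
  {f | (∀ e, e ∉ Gedges n → f e = 0) ∧ (∀ e ∈ Gedges n, 0 ≤ f e) ∧
    ∀ v ∈ Gverts n,
      (∑ e ∈ (Gedges n).filter (fun e => e.2 = v), f e) + Gnet n lam v =
        ∑ e ∈ (Gedges n).filter (fun e => e.1 = v), f e}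

/-- The graphical weight map: `gwt(f)_m` is the total flow on the "a"-edges leaving row
`m+1`, i.e. edges of the form `(v_{m+1,j}, v_{m+2,j})`. -/
def gwtMap (n : ℕ) (f : ((ℕ × ℕ) × (ℕ × ℕ)) → ℝ) : ℕ → ℝ :=
  fun m => if 1 ≤ m ∧ m ≤ n then
      ∑ e ∈ (Gedges n).filter (fun e => e.2.2 = e.1.2 ∧ e.1.1 = m + 1), f e
    else 0

/-- The weight map on triangular arrays: `wt(x)_m = ∑_{j≥m} x_{mj} - ∑_{j≥m+1} x_{m+1,j}`. -/
def wtMap (n : ℕ) (x : ℕ → ℕ → ℝ) : ℕ → ℝ :=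
  fun m => if 1 ≤ m ∧ m ≤ n then
      (∑ j ∈ Finset.Icc m n, x m j) - ∑ j ∈ Finset.Icc (m+1) n, x (m+1) j
    else 0

open Finset

theorem Finset.sum_filter_eq_sum_of_mem_iff {α M : Type*} [AddCommMonoid M] {s t : Finset α}
    {P : α → Prop} [DecidablePred P] [DecidableEq α] {f : α → M} (hf : ∀ a ∉ s, f a = 0)
    (h : ∀ a ∈ s, P a ↔ a ∈ t) :
    ∑ a ∈ s.filter P, f a = ∑ a ∈ t, f a := by
  rw [filter_congr h, filter_mem_eq_inter, inter_comm]
  exact sum_subset inter_subset_left fun a hat has => hf a fun has' => has (mem_inter.2 ⟨hat, has'⟩)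

theorem sum_netflow_eq_sum_leaving {V : Type*} [DecidableEq V] (E : Finset (V × V)) (W : Finset V)
    (hE : ∀ e ∈ E, e.1 ∈ W ∧ e.2 ∈ W) (net : V → ℝ) (f : V × V → ℝ)
    (hcons : ∀ v ∈ W, ∑ e ∈ E.filter (fun e => e.2 = v), f e + net v =
      ∑ e ∈ E.filter (fun e => e.1 = v), f e)
    (Q : V → Prop) [DecidablePred Q] (hQ : ∀ e ∈ E, Q e.2 → Q e.1) :
    ∑ v ∈ W.filter Q, net v = ∑ e ∈ E.filter (fun e => Q e.1 ∧ ¬ Q e.2), f e := by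
  have hsum : ∑ v ∈ W.filter Q, (∑ e ∈ E.filter (fun e => e.2 = v), f e + net v) =
      ∑ v ∈ W.filter Q, ∑ e ∈ E.filter (fun e => e.1 = v), f e :=
    sum_congr rfl fun v hv => hcons v (mem_filter.1 hv).1
  rw [sum_add_distrib, sum_fiberwise_eq_sum_filter, sum_fiberwise_eq_sum_filter] at hsum
  have hin : E.filter (fun e => e.2 ∈ W.filter Q) = E.filter (fun e => Q e.1 ∧ Q e.2) :=
    filter_congr fun e he => by
      simp only [mem_filter, (hE e he).2, true_and]
      exact ⟨fun h => ⟨hQ e he h, h⟩, And.right⟩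
  have hout : E.filter (fun e => e.1 ∈ W.filter Q) = E.filter (fun e => Q e.1) :=
    filter_congr fun e he => by simp [(hE e he).1]
  rw [hin, hout, ← sum_filter_add_sum_filter_not (E.filter fun e => Q e.1) (fun e => Q e.2),
    filter_filter, filter_filter] at hsum
  linarith

def aEdge (p : ℕ × ℕ) : (ℕ × ℕ) × (ℕ × ℕ) := ((p.1, p.2), (p.1 + 1, p.2))

def bEdge (p : ℕ × ℕ) : (ℕ × ℕ) × (ℕ × ℕ) := ((p.1, p.2), (p.1 + 1, p.2 + 1))

theorem mem_aPairs {n : ℕ} {p : ℕ × ℕ} : p ∈ aPairs n ↔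
    (2 ≤ p.1 ∧ p.1 ≤ n + 1) ∧ (2 ≤ p.2 ∧ p.2 ≤ n + 1) ∧
      ((p.1 ≤ p.2 ∧ p.2 ≤ n) ∨ (p.2 = n + 1 ∧ 3 ≤ p.1)) := by
  simp [aPairs, and_assoc]

theorem mem_bPairs {n : ℕ} {p : ℕ × ℕ} : p ∈ bPairs n ↔
    (2 ≤ p.1 ∧ p.1 ≤ n + 1) ∧ (1 ≤ p.2 ∧ p.2 ≤ n) ∧
      ((p.1 ≤ p.2 ∧ p.2 ≤ n) ∨ (p.2 + 1 = p.1 ∧ 3 ≤ p.1)) := by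
  simp [bPairs, and_assoc]

theorem mem_Gedges {n : ℕ} {e : (ℕ × ℕ) × (ℕ × ℕ)} :
    e ∈ Gedges n ↔ (∃ p ∈ aPairs n, aEdge p = e) ∨ (∃ p ∈ bPairs n, bEdge p = e) := by
  simp [Gedges, aEdge, bEdge]

theorem mem_Gverts {n : ℕ} {v : ℕ × ℕ} : v ∈ Gverts n ↔
    (2 ≤ v.1 ∧ v.1 ≤ v.2 ∧ v.2 ≤ n) ∨ (3 ≤ v.1 ∧ v.1 ≤ n + 2 ∧ v.2 + 1 = v.1) ∨
      (3 ≤ v.1 ∧ v.1 ≤ n + 1 ∧ v.2 = n + 1) := by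
  obtain ⟨a, b⟩ := v
  simp only [Gverts, mem_union, mem_filter, mem_product, mem_Icc, mem_image, Prod.mk.injEq]
  constructor
  · rintro ((h | ⟨i, hi, rfl, rfl⟩) | ⟨i, hi, rfl, rfl⟩) <;> omega
  · rintro (h | h | h)
    · omega
    · exact Or.inl (Or.inr ⟨a, by omega, rfl, by omega⟩)
    · exact Or.inr ⟨a, by omega, rfl, h.2.2.symm⟩

theorem endpoints_mem_Gverts {n : ℕ} {e : (ℕ × ℕ) × (ℕ × ℕ)} (he : e ∈ Gedges n) :
    e.1 ∈ Gverts n ∧ e.2 ∈ Gverts n := by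
  rcases mem_Gedges.1 he with ⟨p, hp, rfl⟩ | ⟨p, hp, rfl⟩
  · rw [mem_aPairs] at hp
    simp only [aEdge, mem_Gverts]
    omega
  · rw [mem_bPairs] at hp
    simp only [bEdge, mem_Gverts]
    omega

theorem row_snd_eq_of_mem_Gedges {n : ℕ} {e : (ℕ × ℕ) × (ℕ × ℕ)} (he : e ∈ Gedges n) :
    e.2.1 = e.1.1 + 1 := by
  rcases mem_Gedges.1 he with ⟨p, -, rfl⟩ | ⟨p, -, rfl⟩ <;> rfl

theorem col_fst_le_of_mem_Gedges {n : ℕ} {e : (ℕ × ℕ) × (ℕ × ℕ)} (he : e ∈ Gedges n) :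
    e.1.2 ≤ e.2.2 := by
  rcases mem_Gedges.1 he with ⟨p, -, rfl⟩ | ⟨p, -, rfl⟩ <;> simp [aEdge, bEdge]

theorem sum_Gnet_filter_eq_sub (n : ℕ) (lam : ℕ → ℝ) (Q : ℕ × ℕ → Prop) [DecidablePred Q] {N : ℕ}
    (hN : 1 ≤ N) (hNn : N ≤ n) (hsink : ¬ Q (n + 2, n + 1))
    (hsource : ∀ j, 2 ≤ j → j ≤ n → (Q (2, j) ↔ j ≤ N)) :
    ∑ v ∈ (Gverts n).filter Q, Gnet n lam v = lam 1 - lam N := by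
  have hsupp : ((Gverts n).filter Q).filter (fun v => v.1 = 2 ∧ 2 ≤ v.2 ∧ v.2 ≤ n) =
      (Ico 1 N).image (fun i => (2, i + 1)) := by
    ext ⟨a, b⟩
    simp only [mem_filter, mem_image, mem_Ico, mem_Gverts, Prod.mk.injEq]
    constructor
    · rintro ⟨⟨-, hQ⟩, rfl, hb⟩
      exact ⟨b - 1, by have := (hsource b hb.1 hb.2).1 hQ; omega, rfl, by omega⟩
    · rintro ⟨i, hi, rfl, rfl⟩
      exact ⟨⟨by omega, (hsource _ (by omega) (by omega)).2 (by omega)⟩, rfl, by omega⟩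
  rw [← sum_filter_of_ne (p := fun v => v.1 = 2 ∧ 2 ≤ v.2 ∧ v.2 ≤ n) fun v hv hne => ?_, hsupp,
    sum_image fun _ _ _ _ h => by simpa using h]
  · rw [← neg_sub, ← sum_Ico_sub _ hN, ← sum_neg_distrib]
    refine sum_congr rfl fun i hi => ?_
    rw [mem_Ico] at hi
    rw [Gnet, if_pos ⟨rfl, by omega, by omega⟩]
    simp
  · by_contra hv'
    rw [Gnet, if_neg hv', if_neg fun h => hsink (by rw [← h]; exact (mem_filter.1 hv).2)] at hne
    exact hne rfl

section Flow

variable {n : ℕ} {lam : ℕ → ℝ} {f : (ℕ × ℕ) × (ℕ × ℕ) → ℝ}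

theorem sum_Gnet_filter_eq_sum_leaving (hf : f ∈ FlowSetG n lam)
    (Q : ℕ × ℕ → Prop) [DecidablePred Q] (hQ : ∀ e ∈ Gedges n, Q e.2 → Q e.1) :
    ∑ v ∈ (Gverts n).filter Q, Gnet n lam v =
      ∑ e ∈ (Gedges n).filter (fun e => Q e.1 ∧ ¬ Q e.2), f e :=
  sum_netflow_eq_sum_leaving _ _ (fun _ he => endpoints_mem_Gverts he) _ _ hf.2.2 Q hQ

theorem sum_bEdge_column_eq (hf : f ∈ FlowSetG n lam) {m : ℕ} (h1 : 1 ≤ m)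
    (hmn : m ≤ n) :
    lam 1 - lam m = ∑ k ∈ Icc 2 (m + 1), f (bEdge (k, m)) := by
  rw [← sum_Gnet_filter_eq_sub n lam (fun v => v.2 ≤ m) h1 hmn (by simp only; omega) fun j _ _ => Iff.rfl,
    sum_Gnet_filter_eq_sum_leaving hf _ fun e he => (col_fst_le_of_mem_Gedges he).trans,
    ← sum_image (g := fun k => bEdge (k, m)) fun _ _ _ _ h => by simpa [bEdge] using h]
  apply sum_filter_eq_sum_of_mem_iff hf.1
  intro e he
  rcases mem_Gedges.1 he with ⟨⟨i, j⟩, -, rfl⟩ | ⟨⟨i, j⟩, hp, rfl⟩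
  · simp [aEdge, bEdge]
    omega
  · simp [bEdge, mem_bPairs] at hp ⊢
    omega

theorem gwtMap_add_sum_bEdge_row_eq (hf : f ∈ FlowSetG n lam) {m : ℕ} (h1 : 1 ≤ m)
    (hmn : m ≤ n) :
    lam 1 - lam n = gwtMap n f m + ∑ j ∈ Icc m n, f (bEdge (m + 1, j)) := by
  have hleaving : ∑ e ∈ (Gedges n).filter (fun e => e.1.1 ≤ m + 1 ∧ ¬ e.2.1 ≤ m + 1), f e =
      ∑ e ∈ (Gedges n).filter (fun e => e.2.2 = e.1.2 ∧ e.1.1 = m + 1), f e +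
        ∑ e ∈ (Gedges n).filter (fun e => e.2.2 ≠ e.1.2 ∧ e.1.1 = m + 1), f e := by
    rw [← sum_filter_add_sum_filter_not _ (fun e => e.2.2 = e.1.2), filter_filter, filter_filter]
    congr 1 <;> congr 1 <;>
      exact filter_congr fun e he => by have := row_snd_eq_of_mem_Gedges he; omega
  have hb : ∑ e ∈ (Gedges n).filter (fun e => e.2.2 ≠ e.1.2 ∧ e.1.1 = m + 1), f e =
      ∑ j ∈ Icc m n, f (bEdge (m + 1, j)) := by
    rw [← sum_image (g := fun j => bEdge (m + 1, j)) fun _ _ _ _ h => by simpa [bEdge] using h]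
    apply sum_filter_eq_sum_of_mem_iff hf.1
    intro e he
    rcases mem_Gedges.1 he with ⟨⟨i, j⟩, -, rfl⟩ | ⟨⟨i, j⟩, hp, rfl⟩
    · simp [aEdge, bEdge]
    · simp [bEdge, mem_bPairs] at hp ⊢
      omega
  rw [← sum_Gnet_filter_eq_sub n lam (fun v => v.1 ≤ m + 1) (h1.trans hmn) le_rfl (by simp only; omega)
      fun j _ hj => by simp only; omega,
    sum_Gnet_filter_eq_sum_leaving hf _ fun e he => by have := row_snd_eq_of_mem_Gedges he; omega,
    hleaving, hb, gwtMap, if_pos ⟨h1, hmn⟩]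

end Flow

theorem wtMap_pattern_eq (n : ℕ) (lam : ℕ → ℝ) (b : ℕ → ℕ → ℝ) {m : ℕ} (h1 : 1 ≤ m)
    (hmn : m ≤ n) :
    wtMap n (fun i j => if 1 ≤ i ∧ i ≤ j ∧ j ≤ n then lam j + ∑ k ∈ Icc 2 i, b k j else 0) m =
      lam m + ∑ k ∈ Icc 2 (m + 1), b k m - ∑ j ∈ Icc m n, b (m + 1) j := by
  have hrow : ∀ j ∈ Icc (m + 1) n,
      (if 1 ≤ m + 1 ∧ m + 1 ≤ j ∧ j ≤ n then lam j + ∑ k ∈ Icc 2 (m + 1), b k j else 0) =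
        (if 1 ≤ m ∧ m ≤ j ∧ j ≤ n then lam j + ∑ k ∈ Icc 2 m, b k j else 0) + b (m + 1) j := by
    intro j hj
    rw [mem_Icc] at hj
    rw [if_pos (by omega), if_pos (by omega), sum_Icc_succ_top (by omega)]
    ring
  rw [wtMap, if_pos ⟨h1, hmn⟩, sum_congr rfl hrow, sum_add_distrib,
    ← insert_Icc_add_one_left_eq_Icc hmn, sum_insert (by simp), sum_insert (by simp),
    if_pos ⟨h1, le_rfl, hmn⟩, sum_Icc_succ_top (by omega)]
  ring

theorem stmt8_general (n : ℕ) (lam : ℕ → ℤ) :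
    ∀ f ∈ FlowSetG n (fun j => (lam j : ℝ)), ∀ m, 1 ≤ m → m ≤ n →
      wtMap n (fun i j => if 1 ≤ i ∧ i ≤ j ∧ j ≤ n then
          (lam j : ℝ) + ∑ k ∈ Finset.Icc 2 i, f ((k, j), (k + 1, j + 1)) else 0) m =
        gwtMap n f m + (lam n : ℝ) := by
  intro f hf m h1 hmn
  have hcolumn := sum_bEdge_column_eq hf h1 hmn
  have hrow := gwtMap_add_sum_bEdge_row_eq hf h1 hmn
  rw [wtMap_pattern_eq n _ (fun k j => f ((k, j), (k + 1, j + 1))) h1 hmn]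
  simp only [bEdge] at hcolumn hrow
  linarith

/-- For `f ∈ F_{G_λ}` with corresponding Gelfand-Tsetlin pattern
`P_f` (via `x_{ij} = λ_j + ∑_{k=2}^{i} b_{kj}`), we have `wt(P_f) = gwt(f) + λ_n·𝟙_n`. -/
theorem stmt8 (n : ℕ) (hn : 2 ≤ n) (lam : ℕ → ℤ)
    (hnn : ∀ k, 0 ≤ lam k) (hdec : ∀ k, 1 ≤ k → k < n → lam (k+1) ≤ lam k) :
    ∀ f ∈ FlowSetG n (fun j => (lam j : ℝ)), ∀ m, 1 ≤ m → m ≤ n →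
      wtMap n (fun i j => if 1 ≤ i ∧ i ≤ j ∧ j ≤ n then
          (lam j : ℝ) + ∑ k ∈ Finset.Icc 2 i, f ((k, j), (k + 1, j + 1)) else 0) m =
        gwtMap n f m + (lam n : ℝ) :=
  stmt8_general n lam
end

section
/- The permutahedron P_λ = Conv(Sₙ · λ) of a partition λ with n parts equals the Minkowski sum (λ₁-λ₂)Δ_{1,n} + (λ₂-λ₃)Δ_{2,n} + ··· + (λ_{n-1}-λₙ)Δ_{n-1,n} + λₙΔ_{n,n} of dilated hypersimplices. -/
open Pointwise

def hypersimplex (n k : ℕ) : Set (Fin n → ℝ) :=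
  convexHull ℝ {x | (∀ i, x i = 0 ∨ x i = 1) ∧ (∑ i, x i) = (k : ℝ)}

/-!
Both sides are polytopes, so it suffices to compare vertices and support functions. Writing
`x_σ i = λ (σ i + 1)`, telescoping gives `x_σ = ∑ₖ (λₖ - λₖ₊₁) 𝟙_{σ < k} + λₙ 𝟙`, where `𝟙_{σ < k}`
is a vertex of `Δ_{k,n}`; hence `P_λ` lies in the (convex) Minkowski sum. Conversely, a linear
functional `f` is maximised on `Δ_{k,n}` at `𝟙_{σ < k}` whenever `σ` ranks the values of `f` on
the standard basis decreasingly, so by additivity `f` is bounded on the Minkowski sum by `f x_σ`,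
and the separation theorem puts the Minkowski sum inside `P_λ`.
-/

open Finset

theorem mem_convexHull_of_forall_exists_le {E : Type*} [AddCommGroup E] [Module ℝ E]
    [TopologicalSpace E] [T2Space E] [IsTopologicalAddGroup E] [ContinuousSMul ℝ E]
    [LocallyConvexSpace ℝ E] {s : Set E} (hs : s.Finite) {x : E}
    (h : ∀ f : StrongDual ℝ E, ∃ y ∈ s, f x ≤ f y) : x ∈ convexHull ℝ s := by
  by_contra hx
  obtain ⟨f, u, hfs, hux⟩ := geometric_hahn_banach_closed_point (convex_convexHull ℝ s)
    (hs.isCompact_convexHull ℝ).isClosed hx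
  obtain ⟨y, hy, hxy⟩ := h f
  linarith [hfs y (subset_convexHull ℝ s hy)]

theorem map_eq_sum_mul_map_single {ι F : Type*} [Fintype ι] [DecidableEq ι] [FunLike F (ι → ℝ) ℝ]
    [LinearMapClass F ℝ (ι → ℝ) ℝ] (f : F) (x : ι → ℝ) :
    f x = ∑ i, x i * f (Pi.single i 1) := by
  conv_lhs => rw [← Finset.univ_sum_single x, map_sum]
  refine sum_congr rfl fun i _ => ?_
  rw [← smul_eq_mul, ← map_smul, ← Pi.single_smul', smul_eq_mul, mul_one]

theorem exists_perm_antitone_comp_symm {α : Type*} [LinearOrder α] {n : ℕ} (w : Fin n → α) :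
    ∃ σ : Equiv.Perm (Fin n), Antitone (w ∘ σ.symm) :=
  ⟨(Fin.revPerm.trans (Tuple.sort w)).symm, fun _ _ hij => by
    simpa using Tuple.monotone_sort w (Fin.rev_le_rev.2 hij)⟩

def rankIndicator {n : ℕ} (σ : Equiv.Perm (Fin n)) (k : ℕ) : Fin n → ℝ :=
  fun i => if (σ i : ℕ) < k then 1 else 0

theorem sum_rankIndicator {n k : ℕ} (σ : Equiv.Perm (Fin n)) (hk : k ≤ n) :
    ∑ i, rankIndicator σ k i = k :=
  (Equiv.sum_comp σ fun j : Fin n => if (j : ℕ) < k then (1 : ℝ) else 0).trans <| by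
    simp [sum_boole, Fin.card_filter_val_lt, hk]

theorem rankIndicator_mem_hypersimplex {n k : ℕ} (σ : Equiv.Perm (Fin n)) (hk : k ≤ n) :
    rankIndicator σ k ∈ hypersimplex n k :=
  subset_convexHull ℝ _
    ⟨fun i => by unfold rankIndicator; split_ifs <;> simp, sum_rankIndicator σ hk⟩

theorem hypersimplex_subset (n k : ℕ) :
    hypersimplex n k ⊆ {y | (∀ i, y i ∈ Set.Icc 0 1) ∧ ∑ i, y i = k} := by
  refine convexHull_min ?_ ?_
  · rintro y ⟨h01, hsum⟩
    exact ⟨fun i => by rcases h01 i with h | h <;> simp [h], hsum⟩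
  · rintro x ⟨hx01, hxsum⟩ y ⟨hy01, hysum⟩ a b ha hb hab
    refine ⟨fun i => ?_, ?_⟩
    · obtain ⟨hx0, hx1⟩ := hx01 i
      obtain ⟨hy0, hy1⟩ := hy01 i
      simp only [Pi.add_apply, Pi.smul_apply, smul_eq_mul, Set.mem_Icc]
      constructor <;> nlinarith
    · simp only [Pi.add_apply, Pi.smul_apply, smul_eq_mul, sum_add_distrib, ← mul_sum, hxsum,
        hysum]
      rw [← add_mul, hab, one_mul]

theorem hypersimplex_self (n : ℕ) : hypersimplex n n = {1} := by
  refine Set.eq_singleton_iff_unique_mem.2 ⟨subset_convexHull ℝ _ ⟨by simp, by simp⟩, ?_⟩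
  intro y hy
  obtain ⟨h01, hsum⟩ := hypersimplex_subset n n hy
  have hle : ∀ i ∈ univ, y i ≤ 1 := fun i _ => (h01 i).2
  funext i
  exact (sum_eq_sum_iff_of_le hle).1 (by simpa using hsum) i (mem_univ i)

theorem map_le_map_rankIndicator {n k : ℕ} {F : Type*} [FunLike F (Fin n → ℝ) ℝ]
    [LinearMapClass F ℝ (Fin n → ℝ) ℝ] (hk : k < n) (f : F) {σ : Equiv.Perm (Fin n)}
    (hσ : Antitone fun t => f (Pi.single (σ.symm t) 1)) {y : Fin n → ℝ}
    (hy : y ∈ hypersimplex n k) : f y ≤ f (rankIndicator σ k) := by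
  obtain ⟨h01, hsum⟩ := hypersimplex_subset n k hy
  set d := y - rankIndicator σ k
  -- the value of `f` on the basis vector of rank `k` separates the ranks `< k` from the others
  set m := f (Pi.single (σ.symm ⟨k, hk⟩) 1)
  have hd : ∀ i, d i * f (Pi.single i 1) ≤ d i * m := by
    intro i
    have hfi : σ i ≤ ⟨k, hk⟩ → m ≤ f (Pi.single i 1) := by simpa using @hσ (σ i) ⟨k, hk⟩
    have hfi' : ⟨k, hk⟩ ≤ σ i → f (Pi.single i 1) ≤ m := by simpa using @hσ ⟨k, hk⟩ (σ i)
    by_cases h : (σ i : ℕ) < k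
    · have : d i ≤ 0 := by simp [d, rankIndicator, h, (h01 i).2]
      exact mul_le_mul_of_nonpos_left (hfi (Fin.le_def.2 h.le)) this
    · have : 0 ≤ d i := by simp [d, rankIndicator, h, (h01 i).1]
      exact mul_le_mul_of_nonneg_left (hfi' (Fin.le_def.2 (not_lt.1 h))) this
  have hdsum : ∑ i, d i = 0 := by
    simp [d, sum_sub_distrib, hsum, sum_rankIndicator σ hk.le]
  calc f y = f d + f (rankIndicator σ k) := by rw [← map_add, sub_add_cancel]
    _ ≤ (∑ i, d i) * m + f (rankIndicator σ k) := by
      rw [map_eq_sum_mul_map_single f d, sum_mul]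
      exact add_le_add (sum_le_sum fun i _ => hd i) le_rfl
    _ = f (rankIndicator σ k) := by rw [hdsum, zero_mul, zero_add]

theorem map_le_of_mem_sum_smul_hypersimplex {n : ℕ} {F : Type*} [FunLike F (Fin n → ℝ) ℝ]
    [LinearMapClass F ℝ (Fin n → ℝ) ℝ] (f : F) {σ : Equiv.Perm (Fin n)}
    (hσ : Antitone fun t => f (Pi.single (σ.symm t) 1)) {s : Finset ℕ} {c : ℕ → ℝ}
    (hs : ∀ k ∈ s, k < n ∧ 0 ≤ c k) {q : Fin n → ℝ} (hq : q ∈ ∑ k ∈ s, c k • hypersimplex n k) :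
    f q ≤ f (∑ k ∈ s, c k • rankIndicator σ k) := by
  obtain ⟨g, hg, rfl⟩ := (Set.mem_finsetSum _ _ _).1 hq
  rw [map_sum, map_sum]
  refine sum_le_sum fun k hk => ?_
  obtain ⟨y, hy, hgy⟩ := Set.mem_smul_set.1 (hg hk)
  rw [← hgy, map_smul, map_smul, smul_eq_mul, smul_eq_mul]
  exact mul_le_mul_of_nonneg_left (map_le_map_rankIndicator (hs k hk).1 f hσ hy) (hs k hk).2

theorem comp_perm_eq_sum_smul_rankIndicator {n : ℕ} (L : ℕ → ℝ) (σ : Equiv.Perm (Fin n)) :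
    (fun i => L (σ i + 1)) =
      ∑ k ∈ Icc 1 (n - 1), (L k - L (k + 1)) • rankIndicator σ k + L n • 1 := by
  funext i
  have hi : (σ i : ℕ) < n := (σ i).isLt
  have hfilter : {k ∈ Icc 1 (n - 1) | (σ i : ℕ) < k} = Ico ((σ i : ℕ) + 1) n := by
    ext k; simp only [mem_filter, mem_Icc, mem_Ico]; omega
  have htele : ∑ k ∈ Ico ((σ i : ℕ) + 1) n, (L k - L (k + 1)) = L (σ i + 1) - L n := by
    rw [← neg_sub (L n), ← sum_Ico_sub L hi, ← sum_neg_distrib]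
    exact sum_congr rfl fun k _ => (neg_sub _ _).symm
  simp only [Pi.add_apply, Finset.sum_apply, Pi.smul_apply, smul_eq_mul, rankIndicator, mul_ite,
    mul_one, mul_zero, Pi.one_apply, ← sum_filter, hfilter, htele]
  ring

theorem stmt9_general (n : ℕ) (lam : ℕ → ℤ)
    (hdec : ∀ k, 1 ≤ k → k < n → lam (k+1) ≤ lam k) :
    convexHull ℝ {x : Fin n → ℝ |
        ∃ σ : Equiv.Perm (Fin n), ∀ i, x i = (lam ((σ i : ℕ) + 1) : ℝ)} =
      (∑ k ∈ Finset.Icc 1 (n-1), ((lam k : ℝ) - (lam (k+1) : ℝ)) • hypersimplex n k)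
        + (lam n : ℝ) • hypersimplex n n := by
  have hc : ∀ k ∈ Icc 1 (n - 1), k < n ∧ 0 ≤ (lam k : ℝ) - lam (k + 1) := fun k hk => by
    rw [mem_Icc] at hk
    exact ⟨by omega, sub_nonneg.2 (Int.cast_le.2 (hdec k hk.1 (by omega)))⟩
  rw [hypersimplex_self, Set.smul_set_singleton]
  refine (convexHull_min ?_ ?_).antisymm ?_
  · rintro x ⟨σ, hx⟩
    rw [(funext hx).trans (comp_perm_eq_sum_smul_rankIndicator (fun k => (lam k : ℝ)) σ)]
    exact Set.add_mem_add (Set.finsetSum_mem_finsetSum _ _ _ fun k hk =>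
      Set.smul_mem_smul_set (rankIndicator_mem_hypersimplex σ (hc k hk).1.le)) rfl
  · exact (convex_sum _ fun k _ => (convex_convexHull ℝ _).smul _).add (convex_singleton _)
  · rintro _ ⟨q, hq, _, rfl, rfl⟩
    have hfin : Set.Finite
        {x : Fin n → ℝ | ∃ σ : Equiv.Perm (Fin n), ∀ i, x i = (lam ((σ i : ℕ) + 1) : ℝ)} :=
      (Set.finite_range fun σ : Equiv.Perm (Fin n) => fun i => (lam ((σ i : ℕ) + 1) : ℝ)).subset
        fun x ⟨σ, hx⟩ => ⟨σ, funext fun i => (hx i).symm⟩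
    refine mem_convexHull_of_forall_exists_le hfin fun f => ?_
    obtain ⟨σ, hσ⟩ := exists_perm_antitone_comp_symm fun i => f (Pi.single i 1)
    refine ⟨_, ⟨σ, fun i => rfl⟩, ?_⟩
    rw [comp_perm_eq_sum_smul_rankIndicator (fun k => (lam k : ℝ)) σ, map_add, map_add]
    exact add_le_add (map_le_of_mem_sum_smul_hypersimplex f hσ hc hq) le_rfl

/-- The permutahedron `P_λ = Conv(Sₙ·λ)` equals
`(λ₁-λ₂)Δ_{1,n} + ⋯ + (λ_{n-1}-λ_n)Δ_{n-1,n} + λ_n Δ_{n,n}`. -/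
theorem stmt9 (n : ℕ) (hn : 1 ≤ n) (lam : ℕ → ℤ)
    (hnn : ∀ k, 0 ≤ lam k) (hdec : ∀ k, 1 ≤ k → k < n → lam (k+1) ≤ lam k) :
    convexHull ℝ {x : Fin n → ℝ |
        ∃ σ : Equiv.Perm (Fin n), ∀ i, x i = (lam ((σ i : ℕ) + 1) : ℝ)} =
      (∑ k ∈ Finset.Icc 1 (n-1), ((lam k : ℝ) - (lam (k+1) : ℝ)) • hypersimplex n k)
        + (lam n : ℝ) • hypersimplex n n :=
  stmt9_general n lam hdec
end

section
/- The Rothe diagram D(w) of a permutation w ∈ Sₙ is column-convex if and only if w avoids the patterns 3142 and 4132. -/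
/-- The Rothe diagram of `w`: boxes `(i,j)` with `w(i) > j` and `w⁻¹(j) > i`. -/
def RotheDiagram {n : ℕ} (w : Equiv.Perm (Fin n)) : Set (Fin n × Fin n) :=
  {p | p.2 < w p.1 ∧ p.1 < w⁻¹ p.2}

/-- A diagram is column-convex if each column is an interval. -/
def ColumnConvex {n : ℕ} (D : Set (Fin n × Fin n)) : Prop :=
  ∀ j i₁ i₂ i₃ : Fin n, i₁ ≤ i₂ → i₂ ≤ i₃ → (i₁, j) ∈ D → (i₃, j) ∈ D → (i₂, j) ∈ D

/-- `w` contains the pattern `p` (a sequence of 4 values in relative order `p`). -/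
def ContainsPattern {n : ℕ} (w : Equiv.Perm (Fin n)) (p : Fin 4 → Fin 4) : Prop :=
  ∃ f : Fin 4 → Fin n, StrictMono f ∧ ∀ a b : Fin 4, p a < p b ↔ w (f a) < w (f b)

/-!
Column `w k` of `D(w)` consists of the rows `i < k` with `w i > w k`. It fails to be an interval
exactly when there are rows `i₁ < i₂ < i₃ < k` with `w i₂ < w k < w i₁, w i₃`, and such a
quadruple is an occurrence of `3142` or of `4132`, according as `w i₁ < w i₃` or not.
-/

lemma strictMono_vecCons_four {α : Type*} [Preorder α] {a b c d : α}
    (hab : a < b) (hbc : b < c) (hcd : c < d) : StrictMono ![a, b, c, d] := by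
  refine Fin.strictMono_iff_lt_succ.2 fun i => ?_
  fin_cases i <;> assumption

section

variable {n : ℕ} (w : Equiv.Perm (Fin n))

@[simp]
lemma mem_rotheDiagram_apply {i k : Fin n} :
    (i, w k) ∈ RotheDiagram w ↔ w k < w i ∧ i < k := by
  simp [RotheDiagram]

lemma columnConvex_rotheDiagram_iff :
    ColumnConvex (RotheDiagram w) ↔
      ¬ ∃ i₁ i₂ i₃ k : Fin n, i₁ < i₂ ∧ i₂ < i₃ ∧ i₃ < k ∧
        w i₂ < w k ∧ w k < w i₁ ∧ w k < w i₃ := by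
  constructor
  · rintro hconv ⟨i₁, i₂, i₃, k, h₁₂, h₂₃, h₃k, h₂k, hk₁, hk₃⟩
    have hmem := hconv (w k) i₁ i₂ i₃ h₁₂.le h₂₃.le
      ((mem_rotheDiagram_apply w).2 ⟨hk₁, h₁₂.trans (h₂₃.trans h₃k)⟩)
      ((mem_rotheDiagram_apply w).2 ⟨hk₃, h₃k⟩)
    exact (mem_rotheDiagram_apply w).1 hmem |>.1.asymm h₂k
  · intro hno j i₁ i₂ i₃ h₁₂ h₂₃ h₁ h₃
    obtain ⟨k, rfl⟩ := w.surjective j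
    rw [mem_rotheDiagram_apply] at h₁ h₃ ⊢
    by_contra h₂
    have h₂k : i₂ < k := h₂₃.trans_lt h₃.2
    have hw₂ : w i₂ < w k :=
      lt_of_le_of_ne (not_lt.1 fun h => h₂ ⟨h, h₂k⟩) (w.injective.ne h₂k.ne)
    refine hno ⟨i₁, i₂, i₃, k, ?_, ?_, h₃.2, hw₂, h₁.1, h₃.1⟩
    · exact h₁₂.lt_of_ne (by rintro rfl; exact h₂ h₁)
    · exact h₂₃.lt_of_ne (by rintro rfl; exact h₂ h₃)

lemma containsPattern_of_strictMono {p : Fin 4 → Fin 4} {f g : Fin 4 → Fin n}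
    (hf : StrictMono f) (hg : StrictMono g) (hfg : ∀ a, w (f a) = g (p a)) :
    ContainsPattern w p :=
  ⟨f, hf, fun a b => by rw [hfg, hfg, hg.lt_iff_lt]⟩

lemma containsPattern_3142_or_4132_iff :
    ContainsPattern w ![2, 0, 3, 1] ∨ ContainsPattern w ![3, 0, 2, 1] ↔
      ∃ i₁ i₂ i₃ k : Fin n, i₁ < i₂ ∧ i₂ < i₃ ∧ i₃ < k ∧
        w i₂ < w k ∧ w k < w i₁ ∧ w k < w i₃ := by
  constructor
  · rintro (⟨f, hf, hp⟩ | ⟨f, hf, hp⟩) <;>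
      exact ⟨f 0, f 1, f 2, f 3, hf (by decide), hf (by decide), hf (by decide),
        (hp 1 3).1 (by decide), (hp 3 0).1 (by decide), (hp 3 2).1 (by decide)⟩
  · rintro ⟨i₁, i₂, i₃, k, h₁₂, h₂₃, h₃k, h₂k, hk₁, hk₃⟩
    have hf := strictMono_vecCons_four h₁₂ h₂₃ h₃k
    rcases lt_or_gt_of_ne (w.injective.ne (h₁₂.trans h₂₃).ne) with h₁₃ | h₃₁
    · exact .inl <| containsPattern_of_strictMono w hf
        (strictMono_vecCons_four h₂k hk₁ h₁₃) fun a => by fin_cases a <;> rfl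
    · exact .inr <| containsPattern_of_strictMono w hf
        (strictMono_vecCons_four h₂k hk₃ h₃₁) fun a => by fin_cases a <;> rfl

end

/-- `D(w)` is column-convex iff `w` avoids the patterns `3142` and `4132`. -/
theorem stmt10 {n : ℕ} (w : Equiv.Perm (Fin n)) :
    ColumnConvex (RotheDiagram w) ↔
      ¬ ContainsPattern w ![2, 0, 3, 1] ∧ ¬ ContainsPattern w ![3, 0, 2, 1] := by
  rw [columnConvex_rotheDiagram_iff, ← not_or, containsPattern_3142_or_4132_iff]
end

section
/- Let λ⁽¹⁾,...,λ⁽ⁿ⁾ be partitions where λ⁽ⁱ⁾ has i (possibly zero) parts, embedded in ℝ^{n(n+1)/2} via y_{ij} ↦ x_{i,j+n-k} for GT(λ⁽ᵏ⁾). Then every point of the Minkowski sum P = GT(λ⁽¹⁾) + ··· + GT(λ⁽ⁿ⁾) satisfies: for all positive integers k and all sequences 0 ≤ iₖ < i_{k-1} < ··· < i₁ < j₁ < j₂ < ··· < jₖ ≤ n, the inequality Σ_{s=1}^{k} x_{jₛ-iₛ,jₛ} − Σ_{s=1}^{k-1} x_{j_{s+1}-iₛ,j_{s+1}} ≥ Σ_{s=0}^{iₖ}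 λ⁽ⁿ⁻ˢ⁾_{j₁−s}. -/
/-!
The left-hand side is linear in `x`, so it suffices to bound it on a single summand
`y ∈ GT(λ⁽ᵏ⁾)` read with the column shift `d = n - k`; that summand's share of the right-hand side
is `λ⁽ᵏ⁾_{j₁-d}` if `d ≤ i_K` and `0` otherwise. If `d ≤ i_K`, regroup the alternating sum as
`y_{j₁-i₁, j₁-d}` plus the differences `y_{j_{s+1}-i_{s+1}, ·} - y_{j_{s+1}-i_s, ·}`: these are
nonnegative because GT entries increase down a column, and the first term dominates the top entry
`λ⁽ᵏ⁾_{j₁-d}` for the same reason. If `i_K < d`, the last term `y_{j_K-i_K, j_K-d}` lies below the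
diagonal and vanishes, while each `y_{j_s-i_s, j_s-d} - y_{j_{s+1}-i_s, j_{s+1}-d}` is nonnegative
because GT entries decrease along diagonals.
-/

open Pointwise

/-- The embedding of a size-`k` triangular array into a size-`n` one, via
`y_{ij} ↦ x_{i,j+n-k}`. -/
def embedGT (n k : ℕ) (y : ℕ → ℕ → ℝ) : ℕ → ℕ → ℝ :=
  fun i j => y i (j - (n - k))

namespace GTpoly

variable {k : ℕ} {μ : ℕ → ℝ} {y : ℕ → ℕ → ℝ}

theorem apply_eq_zero_of_lt (hy : y ∈ GTpoly k μ) {i j : ℕ} (hji : j < i) : y i j = 0 :=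
  hy.1 i j (by omega)

theorem apply_nonneg (hy : y ∈ GTpoly k μ) (i j : ℕ) : 0 ≤ y i j := by
  by_cases h : 1 ≤ i ∧ i ≤ j ∧ j ≤ k
  · exact hy.2.1 i j h.1 h.2.1 h.2.2
  · exact (hy.1 i j h).ge

theorem apply_le_apply_of_row_le (hy : y ∈ GTpoly k μ) {i' i j : ℕ} (hi' : 1 ≤ i')
    (hi'i : i' ≤ i) (hij : i ≤ j) (hjk : j ≤ k) : y i' j ≤ y i j := by
  induction i, hi'i using Nat.le_induction with
  | base => exact le_rfl
  | succ m hm ih =>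
    have h := (hy.2.2.2 (m + 1) j (by omega) hij hjk).2
    rw [Nat.add_sub_cancel] at h
    exact (ih (by omega)).trans h

theorem apply_add_add_le (hy : y ∈ GTpoly k μ) {i j : ℕ} (hi : 1 ≤ i) (m : ℕ) :
    y (i + m) (j + m) ≤ y i j := by
  by_cases hin : i ≤ j ∧ j + m ≤ k
  · induction m with
    | zero => exact le_rfl
    | succ m ih =>
      have h := (hy.2.2.2 (i + m + 1) (j + m + 1) (by omega) (by omega) (by omega)).1
      simp only [Nat.add_sub_cancel] at h
      exact h.trans (ih ⟨hin.1, by omega⟩)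
  · rw [hy.1 _ _ (by omega)]
    exact apply_nonneg hy i j

end GTpoly

theorem rel_of_forall_rel_succ_on_Icc {β : Type*} (r : β → β → Prop) [Std.Refl r]
    [IsTrans β r] {f : ℕ → β} {K : ℕ} (h : ∀ s, 1 ≤ s → s < K → r (f s) (f (s + 1)))
    {s t : ℕ} (hs : 1 ≤ s) (hst : s ≤ t) (htK : t ≤ K) : r (f s) (f t) := by
  induction t, hst using Nat.le_induction with
  | base => exact refl _
  | succ m hm ih => exact _root_.trans (ih (by omega)) (h m (by omega) (by omega))

theorem sum_Icc_sub_sum_Icc_eq_first_add (f g : ℕ → ℝ) (K : ℕ) :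
    ∑ s ∈ Finset.Icc 1 (K + 1), f s - ∑ s ∈ Finset.Icc 1 K, g s =
      f 1 + ∑ s ∈ Finset.Icc 1 K, (f (s + 1) - g s) := by
  induction K with
  | zero => simp
  | succ K ih =>
    rw [Finset.sum_Icc_succ_top (by omega) f, Finset.sum_Icc_succ_top (by omega) g,
      Finset.sum_Icc_succ_top (by omega) (fun s => f (s + 1) - g s)]
    linarith

theorem sum_Icc_sub_sum_Icc_eq_last_add (f g : ℕ → ℝ) (K : ℕ) :
    ∑ s ∈ Finset.Icc 1 (K + 1), f s - ∑ s ∈ Finset.Icc 1 K, g s =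
      f (K + 1) + ∑ s ∈ Finset.Icc 1 K, (f s - g s) := by
  rw [Finset.sum_Icc_succ_top (by omega), Finset.sum_sub_distrib]
  ring

theorem chain_bounds {K : ℕ} {ii jj : ℕ → ℕ} (hii : ∀ s, 1 ≤ s → s < K → ii (s + 1) < ii s)
    (hjj : ∀ s, 1 ≤ s → s < K → jj s < jj (s + 1)) (h1 : ii 1 < jj 1) {s : ℕ} (hs : 1 ≤ s)
    (hsK : s ≤ K) : ii K ≤ ii s ∧ ii s < jj s ∧ jj s ≤ jj K := by
  have hii' : ∀ t, 1 ≤ t → t < K → ii t ≥ ii (t + 1) := fun t ht htK => (hii t ht htK).le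
  have hjj' : ∀ t, 1 ≤ t → t < K → jj t ≤ jj (t + 1) := fun t ht htK => (hjj t ht htK).le
  have := rel_of_forall_rel_succ_on_Icc (· ≥ ·) hii' le_rfl hs hsK
  have := rel_of_forall_rel_succ_on_Icc (· ≥ ·) hii' hs hsK le_rfl
  have := rel_of_forall_rel_succ_on_Icc (· ≤ ·) hjj' le_rfl hs hsK
  have := rel_of_forall_rel_succ_on_Icc (· ≤ ·) hjj' hs hsK le_rfl
  omega

def chainForm (K : ℕ) (ii jj : ℕ → ℕ) (x : ℕ → ℕ → ℝ) : ℝ :=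
  ∑ s ∈ Finset.Icc 1 K, x (jj s - ii s) (jj s) -
    ∑ s ∈ Finset.Icc 1 (K - 1), x (jj (s + 1) - ii s) (jj (s + 1))

theorem chainForm_sum {ι : Type*} (K : ℕ) (ii jj : ℕ → ℕ) (t : Finset ι)
    (g : ι → ℕ → ℕ → ℝ) : chainForm K ii jj (∑ i ∈ t, g i) = ∑ i ∈ t, chainForm K ii jj (g i) := by
  simp only [chainForm, Finset.sum_apply, Finset.sum_sub_distrib]
  rw [Finset.sum_comm, Finset.sum_comm (s := Finset.Icc 1 (K - 1))]

theorem GTpoly.le_chainForm_shift {k : ℕ} {μ : ℕ → ℝ} {y : ℕ → ℕ → ℝ} (hy : y ∈ GTpoly k μ)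
    (d : ℕ) {K : ℕ} (hK : 1 ≤ K) {ii jj : ℕ → ℕ}
    (hii : ∀ s, 1 ≤ s → s < K → ii (s + 1) < ii s)
    (hjj : ∀ s, 1 ≤ s → s < K → jj s < jj (s + 1)) (h1 : ii 1 < jj 1) (hjK : jj K ≤ k + d) :
    (if d ≤ ii K then μ (jj 1 - d) else 0) ≤ chainForm K ii jj (fun i j => y i (j - d)) := by
  have hb := fun s => chain_bounds hii hjj h1 (s := s)
  obtain ⟨K, rfl⟩ : ∃ K', K = K' + 1 := ⟨K - 1, by omega⟩
  unfold chainForm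
  rw [Nat.add_sub_cancel]
  split_ifs with hd
  · rw [sum_Icc_sub_sum_Icc_eq_first_add]
    have htop : μ (jj 1 - d) ≤ y (jj 1 - ii 1) (jj 1 - d) := by
      obtain ⟨hK1, -, h1K⟩ := hb 1 le_rfl hK
      rw [← hy.2.2.1 _ (by omega) (by omega)]
      exact GTpoly.apply_le_apply_of_row_le hy le_rfl (by omega) (by omega) (by omega)
    have hstep : ∀ s ∈ Finset.Icc 1 K, 0 ≤ y (jj (s + 1) - ii (s + 1)) (jj (s + 1) - d) -
        y (jj (s + 1) - ii s) (jj (s + 1) - d) := by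
      intro s hs
      rw [Finset.mem_Icc] at hs
      obtain ⟨-, hs₁, -⟩ := hb s hs.1 (by omega)
      obtain ⟨hs₂, -, hs₃⟩ := hb (s + 1) (by omega) (by omega)
      have := hii s hs.1 (by omega)
      have := hjj s hs.1 (by omega)
      exact sub_nonneg.2 (GTpoly.apply_le_apply_of_row_le hy (by omega) (by omega) (by omega)
        (by omega))
    linarith [Finset.sum_nonneg hstep]
  · rw [sum_Icc_sub_sum_Icc_eq_last_add]
    have hlast : y (jj (K + 1) - ii (K + 1)) (jj (K + 1) - d) = 0 := by
      obtain ⟨-, h, -⟩ := hb (K + 1) hK le_rfl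
      exact GTpoly.apply_eq_zero_of_lt hy (by omega)
    have hstep : ∀ s ∈ Finset.Icc 1 K, 0 ≤ y (jj s - ii s) (jj s - d) -
        y (jj (s + 1) - ii s) (jj (s + 1) - d) := by
      intro s hs
      rw [Finset.mem_Icc] at hs
      obtain ⟨-, hs₁, -⟩ := hb s hs.1 (by omega)
      have := hjj s hs.1 (by omega)
      refine sub_nonneg.2 ?_
      by_cases hdj : d ≤ jj s
      · have h := GTpoly.apply_add_add_le hy (i := jj s - ii s) (j := jj s - d) (by omega)
          (jj (s + 1) - jj s)
        rwa [show jj s - ii s + (jj (s + 1) - jj s) = jj (s + 1) - ii s by omega,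
          show jj s - d + (jj (s + 1) - jj s) = jj (s + 1) - d by omega] at h
      · rw [GTpoly.apply_eq_zero_of_lt hy (by omega)]
        exact GTpoly.apply_nonneg hy _ _
    linarith [Finset.sum_nonneg hstep]

theorem sum_Icc_ite_tsub_le (f : ℕ → ℕ → ℝ) {m n : ℕ} (hmn : m < n) :
    ∑ k ∈ Finset.Icc 1 n, (if n - k ≤ m then f k (n - k) else 0) =
      ∑ s ∈ Finset.Icc 0 m, f (n - s) s := by
  rw [← Finset.sum_filter]
  refine Finset.sum_nbij' (fun k => n - k) (fun s => n - s) ?_ ?_ ?_ ?_ ?_ <;>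
    intro a ha <;> simp only [Finset.mem_Icc, Finset.mem_filter] at ha ⊢
  all_goals first | omega | rw [Nat.sub_sub_self (by omega)]

theorem stmt11_general (n : ℕ) (lam : ℕ → ℕ → ℤ) :
    ∀ x ∈ ∑ k ∈ Finset.Icc 1 n, (embedGT n k) '' GTpoly k (fun r => (lam k r : ℝ)),
      ∀ K : ℕ, 1 ≤ K → ∀ ii jj : ℕ → ℕ,
        (∀ s, 1 ≤ s → s < K → ii (s+1) < ii s) →
        (∀ s, 1 ≤ s → s < K → jj s < jj (s+1)) →
        ii 1 < jj 1 → jj K ≤ n →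
        (∑ s ∈ Finset.Icc 1 K, x (jj s - ii s) (jj s)) -
            (∑ s ∈ Finset.Icc 1 (K-1), x (jj (s+1) - ii s) (jj (s+1))) ≥
          ∑ s ∈ Finset.Icc 0 (ii K), ((lam (n - s) (jj 1 - s) : ℤ) : ℝ) := by
  intro x hx K hK ii jj hii hjj h1 hjn
  obtain ⟨g, hg, rfl⟩ := (Set.mem_finsetSum _ _ _).1 hx
  obtain ⟨-, hiK, -⟩ := chain_bounds hii hjj h1 hK le_rfl
  change _ ≤ chainForm K ii jj _
  rw [chainForm_sum,
    ← sum_Icc_ite_tsub_le (fun k s => (lam k (jj 1 - s) : ℝ)) (by omega : ii K < n)]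
  refine Finset.sum_le_sum fun k hk => ?_
  obtain ⟨y, hy, hgy⟩ := hg hk
  rw [Finset.mem_Icc] at hk
  rw [← hgy]
  exact GTpoly.le_chainForm_shift hy (n - k) hK hii hjj h1 (by omega)

/-- Every point of the Minkowski sum `GT(λ⁽¹⁾) + ⋯ + GT(λ⁽ⁿ⁾)` satisfies, for each `K ≥ 1`
and each sequence `0 ≤ i_K < ⋯ < i₁ < j₁ < ⋯ < j_K ≤ n`, the inequality
`∑_s x_{j_s-i_s,j_s} − ∑_s x_{j_{s+1}-i_s,j_{s+1}} ≥ ∑_{s=0}^{i_K} λ⁽ⁿ⁻ˢ⁾_{j₁−s}`. -/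
theorem stmt11 (n : ℕ) (hn : 1 ≤ n) (lam : ℕ → ℕ → ℤ)
    (hnn : ∀ k r, 0 ≤ lam k r)
    (hdec : ∀ k, 1 ≤ k → k ≤ n → ∀ r, 1 ≤ r → r < k → lam k (r+1) ≤ lam k r)
    (hout : ∀ k r, r = 0 ∨ k < r → lam k r = 0) :
    ∀ x ∈ ∑ k ∈ Finset.Icc 1 n, (embedGT n k) '' GTpoly k (fun r => (lam k r : ℝ)),
      ∀ K : ℕ, 1 ≤ K → ∀ ii jj : ℕ → ℕ,
        (∀ s, 1 ≤ s → s < K → ii (s+1) < ii s) →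
        (∀ s, 1 ≤ s → s < K → jj s < jj (s+1)) →
        ii 1 < jj 1 → jj K ≤ n →
        (∑ s ∈ Finset.Icc 1 K, x (jj s - ii s) (jj s)) -
            (∑ s ∈ Finset.Icc 1 (K-1), x (jj (s+1) - ii s) (jj (s+1))) ≥
          ∑ s ∈ Finset.Icc 0 (ii K), ((lam (n - s) (jj 1 - s) : ℤ) : ℝ) :=
  stmt11_general n lam
end

section
/- Let λ⁽¹⁾,...,λ⁽ⁿ⁾ be partitions where λ⁽ⁱ⁾ has i parts, embedded as above. Then every point (x_{ij}) of the Minkowski sum GT(λ⁽¹⁾) + ··· + GT(λ⁽ⁿ⁾) satisfies x_{i-1,j-1} ≥ x_{ij} for all 1 ≤ i ≤ j ≤ n, and the equality x_{1,j} = Σ_{s=0}^{j-1} λ⁽ⁿ⁻ˢ⁾_{j-s} for all 1 ≤ j ≤ n. -/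
/-!
Both conclusions pass to Minkowski sums. The diagonal inequalities `x_{i,j} ≤ x_{i-1,j-1}` cut out
an additive submonoid containing every embedded Gelfand-Tsetlin polytope, since the embedding
shifts columns only. The evaluation `x ↦ x_{1j}` is additive and constant on the `k`-th embedded
polytope, where it equals `λ⁽ᵏ⁾_{j-n+k}` (or `0` when `j ≤ n - k`); summing over `k` and
reindexing by `k = n - s` gives the first-row formula.
-/

open Pointwise Finset

section MinkowskiSum

variable {ι M N : Type*} [AddCommMonoid M] [AddCommMonoid N] {s : Finset ι} {S : ι → Set M}

lemma finsetSum_subset_addSubmonoid (P : AddSubmonoid M) (h : ∀ i ∈ s, S i ⊆ P) :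
    ∑ i ∈ s, S i ⊆ P := by
  intro x hx
  obtain ⟨g, hg, rfl⟩ := (Set.mem_finsetSum _ _ _).1 hx
  exact P.sum_mem fun i hi => h i hi (hg hi)

lemma map_eq_sum_of_mem_finsetSum (f : M →+ N) {c : ι → N}
    (h : ∀ i ∈ s, ∀ a ∈ S i, f a = c i) {x : M} (hx : x ∈ ∑ i ∈ s, S i) :
    f x = ∑ i ∈ s, c i := by
  obtain ⟨g, hg, rfl⟩ := (Set.mem_finsetSum _ _ _).1 hx
  rw [map_sum]
  exact sum_congr rfl fun i hi => h i hi _ (hg hi)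

end MinkowskiSum

def diagAntitoneCone : AddSubmonoid (ℕ → ℕ → ℝ) where
  carrier := {x | ∀ i j, 2 ≤ i → x i j ≤ x (i-1) (j-1)}
  add_mem' hx hy i j hi := add_le_add (hx i j hi) (hy i j hi)
  zero_mem' _ _ _ := le_rfl

namespace GTpoly

variable {k : ℕ} {lam : ℕ → ℝ} {y : ℕ → ℕ → ℝ}

lemma apply_le_apply_pred_pred (hy : y ∈ GTpoly k lam) {i : ℕ} (hi : 2 ≤ i) (j : ℕ) :
    y i j ≤ y (i-1) (j-1) := by
  obtain ⟨hzero, hnonneg, -, hineq⟩ := hy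
  by_cases h : 1 ≤ i ∧ i ≤ j ∧ j ≤ k
  · exact (hineq i j hi h.2.1 h.2.2).1
  · rw [hzero i j h]
    by_cases h' : 1 ≤ i - 1 ∧ i - 1 ≤ j - 1 ∧ j - 1 ≤ k
    · exact hnonneg _ _ h'.1 h'.2.1 h'.2.2
    · rw [hzero _ _ h']

lemma apply_one (hy : y ∈ GTpoly k lam) {j : ℕ} (hj : j ≤ k) :
    y 1 j = if 1 ≤ j then lam j else 0 := by
  split_ifs with h
  · exact hy.2.2.1 j h hj
  · exact hy.1 1 j (by omega)

end GTpoly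

lemma embedGT_mem_diagAntitoneCone {n k : ℕ} {lam : ℕ → ℝ} {y : ℕ → ℕ → ℝ}
    (hy : y ∈ GTpoly k lam) : embedGT n k y ∈ diagAntitoneCone := by
  intro i j hi
  have hshift : j - 1 - (n - k) = j - (n - k) - 1 := by omega
  simpa only [embedGT, hshift] using GTpoly.apply_le_apply_pred_pred hy hi _

lemma sum_Icc_ite_shift_eq {M : Type*} [AddCommMonoid M] (f : ℕ → ℕ → M) {n j : ℕ}
    (hj : 1 ≤ j) (hjn : j ≤ n) :
    ∑ k ∈ Icc 1 n, (if 1 ≤ j - (n - k) then f k (j - (n - k)) else 0) =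
      ∑ s ∈ Icc 0 (j - 1), f (n - s) (j - s) := by
  rw [← sum_filter]
  refine sum_nbij' (fun k => n - k) (fun s => n - s) ?_ ?_ ?_ ?_ ?_ <;> intro k hk <;>
    simp only [mem_filter, mem_Icc] at hk ⊢
  · omega
  · omega
  · omega
  · omega
  · congr 1; omega

theorem stmt12_general (n : ℕ) (lam : ℕ → ℕ → ℤ) :
    ∀ x ∈ ∑ k ∈ Finset.Icc 1 n, (embedGT n k) '' GTpoly k (fun r => (lam k r : ℝ)),
      (∀ i j, 2 ≤ i → i ≤ j → j ≤ n → x (i-1) (j-1) ≥ x i j) ∧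
      (∀ j, 1 ≤ j → j ≤ n →
        x 1 j = ∑ s ∈ Finset.Icc 0 (j-1), ((lam (n - s) (j - s) : ℤ) : ℝ)) := by
  intro x hx
  refine ⟨fun i j hi _ _ => ?_, fun j hj hjn => ?_⟩
  · refine finsetSum_subset_addSubmonoid diagAntitoneCone ?_ hx i j hi
    rintro k - _ ⟨y, hy, rfl⟩
    exact embedGT_mem_diagAntitoneCone hy
  · let evalOneJ : (ℕ → ℕ → ℝ) →+ ℝ :=
      (Pi.evalAddMonoidHom (fun _ => ℝ) j).comp (Pi.evalAddMonoidHom (fun _ => ℕ → ℝ) 1)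
    rw [← sum_Icc_ite_shift_eq (fun k r => (lam k r : ℝ)) hj hjn]
    refine map_eq_sum_of_mem_finsetSum evalOneJ ?_ hx
    rintro k hk _ ⟨y, hy, rfl⟩
    exact GTpoly.apply_one hy (by simp only [mem_Icc] at hk; omega)

/-- Every point of the Minkowski sum `GT(λ⁽¹⁾) + ⋯ + GT(λ⁽ⁿ⁾)` satisfies
`x_{i-1,j-1} ≥ x_{ij}` for all `1 ≤ i ≤ j ≤ n` (read where defined) and the equalities
`x_{1j} = ∑_{s=0}^{j-1} λ⁽ⁿ⁻ˢ⁾_{j-s}` for `1 ≤ j ≤ n`. -/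
theorem stmt12 (n : ℕ) (hn : 1 ≤ n) (lam : ℕ → ℕ → ℤ)
    (hnn : ∀ k r, 0 ≤ lam k r)
    (hdec : ∀ k, 1 ≤ k → k ≤ n → ∀ r, 1 ≤ r → r < k → lam k (r+1) ≤ lam k r)
    (hout : ∀ k r, r = 0 ∨ k < r → lam k r = 0) :
    ∀ x ∈ ∑ k ∈ Finset.Icc 1 n, (embedGT n k) '' GTpoly k (fun r => (lam k r : ℝ)),
      (∀ i j, 2 ≤ i → i ≤ j → j ≤ n → x (i-1) (j-1) ≥ x i j) ∧
      (∀ j, 1 ≤ j → j ≤ n →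
        x 1 j = ∑ s ∈ Finset.Icc 0 (j-1), ((lam (n - s) (j - s) : ℤ) : ℝ)) :=
  stmt12_general n lam
end

section
/- Let n=3 and let λ⁽³⁾ = (a+b, a, 0), λ⁽²⁾ = (c, 0), λ⁽¹⁾ = (0) for nonnegative reals a, b, c. Then the Minkowski sum GT(λ⁽¹⁾) + GT(λ⁽²⁾) + GT(λ⁽³⁾) (with the standard embedding) equals the set of triangular arrays (x_{ij})_{1≤i≤j≤3} with x₁₁ = a+b, x₁₂ = a+c, x₁₃ = 0, satisfying x₁₁ ≥ x₂₂ ≥ x₃₃ ≥ 0, x₁₂ ≥ x₂₃ ≥ 0, x₂₂ ≥ a, x₂₃ ≤ c + min(a, x₃₃). -/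
/-!
GT((0)) is the single zero array, a point of GT((c, 0)) is determined by its entry
`y₂₂ = t ∈ [0, c]`, and a point of GT((a+b, a, 0)) by `(y₂₂, y₂₃, y₃₃) = (s, t', u)` with
`a ≤ s ≤ a + b`, `0 ≤ t' ≤ a` and `t' ≤ u ≤ s`. After the embedding the sum has top row
`(a+b, a+c, 0)`, `x₂₂ = s`, `x₃₃ = u` and `x₂₃ = t + t'`, so for fixed `u` the possible values
of `x₂₃` form `[0, c] + [0, min a u] = [0, c + min a u]`.
-/

open Pointwise

def tri2 (p q r : ℝ) : ℕ → ℕ → ℝ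
  | 1, 1 => p | 1, 2 => q | 2, 2 => r | _, _ => 0

def tri3 (p q r s t u : ℝ) : ℕ → ℕ → ℝ
  | 1, 1 => p | 1, 2 => q | 1, 3 => r | 2, 2 => s | 2, 3 => t | 3, 3 => u | _, _ => 0

section

variable {i j : ℕ}

lemma tri2_eq_zero {p q r : ℝ} (h : ¬(1 ≤ i ∧ i ≤ j ∧ j ≤ 2)) : tri2 p q r i j = 0 := by
  unfold tri2; split <;> first | rfl | omega

lemma tri3_eq_zero {p q r s t u : ℝ} (h : ¬(1 ≤ i ∧ i ≤ j ∧ j ≤ 3)) :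
    tri3 p q r s t u i j = 0 := by
  unfold tri3; split <;> first | rfl | omega

lemma eq_tri2 {x : ℕ → ℕ → ℝ} (hx : ∀ i j, ¬(1 ≤ i ∧ i ≤ j ∧ j ≤ 2) → x i j = 0) :
    x = tri2 (x 1 1) (x 1 2) (x 2 2) := by
  funext i j
  by_cases h : 1 ≤ i ∧ i ≤ j ∧ j ≤ 2
  · obtain ⟨hi, hij, hj⟩ := h
    interval_cases j <;> interval_cases i <;> rfl
  · rw [hx i j h, tri2_eq_zero h]

lemma eq_tri3 {x : ℕ → ℕ → ℝ} (hx : ∀ i j, ¬(1 ≤ i ∧ i ≤ j ∧ j ≤ 3) → x i j = 0) :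
    x = tri3 (x 1 1) (x 1 2) (x 1 3) (x 2 2) (x 2 3) (x 3 3) := by
  funext i j
  by_cases h : 1 ≤ i ∧ i ≤ j ∧ j ≤ 3
  · obtain ⟨hi, hij, hj⟩ := h
    interval_cases j <;> interval_cases i <;> rfl
  · rw [hx i j h, tri3_eq_zero h]

end

lemma tri3_add (p q r s t u p' q' r' s' t' u' : ℝ) :
    tri3 p q r s t u + tri3 p' q' r' s' t' u' =
      tri3 (p + p') (q + q') (r + r') (s + s') (t + t') (u + u') :=
  eq_tri3 fun _ _ h => by simp [tri3_eq_zero h]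

lemma embedGT_self (n : ℕ) (y : ℕ → ℕ → ℝ) : embedGT n n y = y := by
  funext _ _
  simp only [embedGT, Nat.sub_self, Nat.sub_zero]

lemma embedGT_three_two_tri2 (p q r : ℝ) : embedGT 3 2 (tri2 p q r) = tri3 0 p q 0 r 0 :=
  eq_tri3 fun i j h => tri2_eq_zero (by omega)

lemma GTpoly_one_zero : GTpoly 1 (fun _ => 0) = {0} := by
  ext y
  constructor
  · rintro ⟨hy, -, hy1, -⟩
    funext i j
    by_cases h : 1 ≤ i ∧ i ≤ j ∧ j ≤ 1
    · obtain rfl : i = 1 := by omega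
      obtain rfl : j = 1 := by omega
      exact hy1 1 le_rfl le_rfl
    · exact hy i j h
  · rintro rfl
    exact ⟨fun _ _ _ => rfl, fun _ _ _ _ _ => le_rfl, fun _ _ _ => rfl, fun _ _ _ _ _ => by omega⟩

lemma mem_GTpoly_two_iff {lam : ℕ → ℝ} {y : ℕ → ℕ → ℝ} :
    y ∈ GTpoly 2 lam ↔
      ∃ t, y = tri2 (lam 1) (lam 2) t ∧ 0 ≤ lam 2 ∧ lam 2 ≤ t ∧ t ≤ lam 1 := by
  constructor
  · rintro ⟨hy, hpos, htop, hint⟩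
    have h1 := htop 1 le_rfl (by norm_num)
    have h2 := htop 2 (by norm_num) le_rfl
    have h22 := hint 2 2 le_rfl le_rfl le_rfl
    simp only [ge_iff_le] at h22
    refine ⟨y 2 2, ?_, h2 ▸ hpos 1 2 le_rfl (by norm_num) le_rfl, ?_⟩
    · rw [← h1, ← h2]
      exact eq_tri2 hy
    · rw [← h1, ← h2]
      exact ⟨h22.2, h22.1⟩
  · rintro ⟨t, rfl, h2, h2t, ht1⟩
    refine ⟨fun _ _ h => tri2_eq_zero h, fun i j hi hij hj => ?_, fun j hj hj' => ?_,
      fun i j hi hij hj => ?_⟩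
    · interval_cases j <;> interval_cases i <;> simp only [tri2] <;> linarith
    · interval_cases j <;> rfl
    · interval_cases j <;> interval_cases i
      exact ⟨ht1, h2t⟩

lemma mem_GTpoly_three_iff {lam : ℕ → ℝ} {y : ℕ → ℕ → ℝ} :
    y ∈ GTpoly 3 lam ↔
      ∃ s t u, y = tri3 (lam 1) (lam 2) (lam 3) s t u ∧ 0 ≤ lam 3 ∧
        lam 2 ≤ s ∧ s ≤ lam 1 ∧ lam 3 ≤ t ∧ t ≤ lam 2 ∧ t ≤ u ∧ u ≤ s := by
  constructor
  · rintro ⟨hy, hpos, htop, hint⟩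
    have h1 := htop 1 le_rfl (by norm_num)
    have h2 := htop 2 (by norm_num) (by norm_num)
    have h3 := htop 3 (by norm_num) le_rfl
    have h22 := hint 2 2 le_rfl le_rfl (by norm_num)
    have h23 := hint 2 3 le_rfl (by norm_num) le_rfl
    have h33 := hint 3 3 (by norm_num) le_rfl le_rfl
    simp only [ge_iff_le] at h22 h23 h33
    refine ⟨y 2 2, y 2 3, y 3 3, ?_, h3 ▸ hpos 1 3 le_rfl (by norm_num) le_rfl, ?_⟩
    · rw [← h1, ← h2, ← h3]
      exact eq_tri3 hy
    · rw [← h1, ← h2, ← h3]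
      exact ⟨h22.2, h22.1, h23.2, h23.1, h33.2, h33.1⟩
  · rintro ⟨s, t, u, rfl, h3, h2s, hs1, h3t, ht2, htu, hus⟩
    refine ⟨fun _ _ h => tri3_eq_zero h, fun i j hi hij hj => ?_, fun j hj hj' => ?_,
      fun i j hi hij hj => ?_⟩
    · interval_cases j <;> interval_cases i <;> simp only [tri3] <;> linarith
    · interval_cases j <;> rfl
    · interval_cases j <;> interval_cases i
      exacts [⟨hs1, h2s⟩, ⟨ht2, h3t⟩, ⟨hus, htu⟩]

lemma exists_add_eq_of_mem_Icc {α : Type*} [AddCommGroup α] [LinearOrder α]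
    [IsOrderedAddMonoid α] {c m z : α} (hc : 0 ≤ c) (hm : 0 ≤ m) (hz : z ∈ Set.Icc 0 (c + m)) :
    ∃ t ∈ Set.Icc 0 c, ∃ t' ∈ Set.Icc 0 m, t + t' = z := by
  refine ⟨min z c, ⟨le_min hz.1 hc, min_le_right _ _⟩, z - min z c, ⟨?_, ?_⟩, by abel⟩
  · exact sub_nonneg.2 (min_le_left _ _)
  · rcases le_total z c with h | h
    · rw [min_eq_left h, sub_self]; exact hm
    · rw [min_eq_right h, sub_le_iff_le_add']; exact hz.2

theorem stmt14_general (a b c : ℝ) (ha : 0 ≤ a) (hc : 0 ≤ c) :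
    (embedGT 3 1 '' GTpoly 1 (fun _ => (0 : ℝ))) +
      (embedGT 3 2 '' GTpoly 2 (fun r => if r = 1 then c else 0)) +
      (embedGT 3 3 '' GTpoly 3 (fun r => if r = 1 then a + b else if r = 2 then a else 0)) =
    {x : ℕ → ℕ → ℝ |
      (∀ i j, ¬(1 ≤ i ∧ i ≤ j ∧ j ≤ 3) → x i j = 0) ∧
      x 1 1 = a + b ∧ x 1 2 = a + c ∧ x 1 3 = 0 ∧
      x 1 1 ≥ x 2 2 ∧ x 2 2 ≥ x 3 3 ∧ x 3 3 ≥ 0 ∧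
      x 1 2 ≥ x 2 3 ∧ x 2 3 ≥ 0 ∧
      a ≤ x 2 2 ∧ x 2 3 ≤ c + min a (x 3 3)} := by
  have hGT1 : embedGT 3 1 '' GTpoly 1 (fun _ => 0) = 0 := by
    rw [GTpoly_one_zero, Set.image_singleton]; rfl
  ext x
  rw [hGT1, zero_add]
  simp +decide only [Set.mem_add, Set.mem_image, mem_GTpoly_two_iff, mem_GTpoly_three_iff,
    Set.mem_ofPred_eq, ↓reduceIte]
  constructor
  · rintro ⟨_, ⟨_, ⟨t, rfl, -, ht0, htc⟩, rfl⟩, _,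
      ⟨_, ⟨s, t', u, rfl, -, has, hsb, ht'0, ht'a, ht'u, hus⟩, rfl⟩, rfl⟩
    rw [embedGT_three_two_tri2, embedGT_self, tri3_add]
    simp only [tri3, zero_add]
    exact ⟨fun _ _ h => tri3_eq_zero h, trivial, add_comm c a, trivial, hsb, hus,
      ht'0.trans ht'u, by linarith, by linarith, has, add_le_add htc (le_min ht'a ht'u)⟩
  · rintro ⟨hx, h11, h12, h13, hs1, hus, hu0, -, ht0, has, htmin⟩
    obtain ⟨t, ht, t', ht', htt'⟩ :=
      exists_add_eq_of_mem_Icc hc (le_min ha hu0) ⟨ht0, htmin⟩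
    refine ⟨_, ⟨tri2 c 0 t, ⟨t, rfl, le_rfl, ht⟩, rfl⟩, _,
      ⟨tri3 (a + b) a 0 (x 2 2) t' (x 3 3),
        ⟨x 2 2, t', x 3 3, rfl, le_rfl, has, by linarith, ?_⟩, rfl⟩, ?_⟩
    · exact ⟨ht'.1, ht'.2.trans (min_le_left _ _), ht'.2.trans (min_le_right _ _), hus⟩
    · calc _ = tri3 (a + b) (a + c) 0 (x 2 2) (x 2 3) (x 3 3) := by
            rw [embedGT_three_two_tri2, embedGT_self, tri3_add, ← htt']; congr 1 <;> ring
        _ = x := ((eq_tri3 hx).trans (by rw [h11, h12, h13])).symm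

/-- Example with `n = 3`, `λ⁽³⁾ = (a+b, a, 0)`, `λ⁽²⁾ = (c, 0)`, `λ⁽¹⁾ = (0)`:
the Minkowski sum `GT(λ⁽¹⁾) + GT(λ⁽²⁾) + GT(λ⁽³⁾)` is the set of triangular arrays with
`x₁₁ = a+b`, `x₁₂ = a+c`, `x₁₃ = 0`, `x₁₁ ≥ x₂₂ ≥ x₃₃ ≥ 0`, `x₁₂ ≥ x₂₃ ≥ 0`, `x₂₂ ≥ a`
and `x₂₃ ≤ c + min a x₃₃`. -/
theorem stmt14 (a b c : ℝ) (ha : 0 ≤ a) (hb : 0 ≤ b) (hc : 0 ≤ c) :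
    (embedGT 3 1 '' GTpoly 1 (fun _ => (0 : ℝ))) +
      (embedGT 3 2 '' GTpoly 2 (fun r => if r = 1 then c else 0)) +
      (embedGT 3 3 '' GTpoly 3 (fun r => if r = 1 then a + b else if r = 2 then a else 0)) =
    {x : ℕ → ℕ → ℝ |
      (∀ i j, ¬(1 ≤ i ∧ i ≤ j ∧ j ≤ 3) → x i j = 0) ∧
      x 1 1 = a + b ∧ x 1 2 = a + c ∧ x 1 3 = 0 ∧
      x 1 1 ≥ x 2 2 ∧ x 2 2 ≥ x 3 3 ∧ x 3 3 ≥ 0 ∧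
      x 1 2 ≥ x 2 3 ∧ x 2 3 ≥ 0 ∧
      a ≤ x 2 2 ∧ x 2 3 ≤ c + min a (x 3 3)} :=
  stmt14_general a b c ha hc
end

section
/- The image of the Gelfand-Tsetlin polytope GT(λ) under the weight map wt equals the permutahedron P_λ = Conv(Sₙ·λ). -/
/-!
Deleting the top row `λ` of a Gelfand–Tsetlin pattern leaves a pattern whose top row `μ`
interlaces `λ`, and the weight becomes `(|λ| - |μ|, wt')`. Both inclusions follow by induction on
`n` along this decomposition.

For `wt(GT(λ)) ⊆ P_λ`, the map `z ↦ (|λ| - |μ|, z)` is affine, so it suffices that it sends the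
vertices of `P_μ` into `P_λ`, and by symmetry only `(|λ| - |μ|, μ)` has to be checked. That point
is reached from a vertex of `P_λ` by transfers of mass between two coordinates, each of which is a
convex combination of a point and its image under a transposition.

For `P_λ ⊆ wt(GT(λ))`, the image is convex, being a linear image of a polytope, and a vertex
`λ ∘ σ` is the weight of the pattern whose second row is `λ` with the entry `λ (σ 1)` deleted;
this row interlaces `λ` because `λ` is decreasing.
-/

namespace GelfandTsetlin

open Finset

theorem mapsTo_convexHull {E F : Type*} [AddCommMonoid E] [Module ℝ E] [AddCommMonoid F]
    [Module ℝ F] {G : E → F}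
    (hG : ∀ (x y : E) (a b : ℝ), a + b = 1 → G (a • x + b • y) = a • G x + b • G y)
    {s : Set E} {C : Set F} (hC : Convex ℝ C) (hs : Set.MapsTo G s C) :
    Set.MapsTo G (convexHull ℝ s) C :=
  convexHull_min hs fun x hx y hy a b ha hb hab => by
    change G (a • x + b • y) ∈ C
    rw [hG x y a b hab]
    exact hC hx hy ha hb hab

theorem antitoneOn_Icc_of_succ_le {α : Type*} [Preorder α] {n : ℕ} {f : ℕ → α}
    (hf : ∀ k, 1 ≤ k → k < n → f (k + 1) ≤ f k) : AntitoneOn f (Set.Icc 1 n) := by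
  refine antitoneOn_of_le_pred Set.ordConnected_Icc fun a _ ⟨ha1, han⟩ hpa => ?_
  rw [Order.pred_eq_sub_one] at hpa ⊢
  simpa [Nat.sub_add_cancel ha1] using hf (a - 1) hpa.1 (by omega)

theorem apply_mem_Icc_iff {n : ℕ} {σ : Equiv.Perm ℕ} (hσ : ∀ m, ¬(1 ≤ m ∧ m ≤ n) → σ m = m)
    (m : ℕ) : (1 ≤ σ m ∧ σ m ≤ n) ↔ (1 ≤ m ∧ m ≤ n) := by
  constructor
  · intro h
    by_contra hm
    exact hm (hσ m hm ▸ h)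
  · intro hm
    by_contra h
    rw [σ.injective (hσ (σ m) h)] at h
    exact h hm

theorem map_Icc_comp_perm {α : Type*} {n : ℕ} {σ : Equiv.Perm ℕ}
    (hσ : ∀ m, ¬(1 ≤ m ∧ m ≤ n) → σ m = m) (f : ℕ → α) :
    (Icc 1 n).val.map (f ∘ σ) = (Icc 1 n).val.map f := by
  have hmap : (Icc 1 n).map σ.toEmbedding = Icc 1 n := by
    ext k
    simpa [Finset.mem_map_equiv] using (apply_mem_Icc_iff hσ (σ.symm k)).symm
  conv_rhs => rw [← hmap, map_val, Multiset.map_map]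
  rfl

/-- `skip s` is the increasing enumeration of `ℕ ∖ {s}`. -/
def skip (s j : ℕ) : ℕ := if j < s then j else j + 1

theorem skip_injective (s : ℕ) : Function.Injective (skip s) := by
  intro a b h
  simp only [skip] at h
  split_ifs at h <;> omega

theorem monotone_skip (s : ℕ) : Monotone (skip s) := by
  intro a b h
  simp only [skip]
  split_ifs <;> omega

theorem mapsTo_skip (s n : ℕ) : Set.MapsTo (skip s) (Set.Icc 1 n) (Set.Icc 1 (n + 1)) := by
  intro j hj
  simp only [skip, Set.mem_Icc] at hj ⊢
  split_ifs <;> omega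

theorem map_skip_Icc {n s : ℕ} (hs : s ∈ Icc 1 (n + 1)) :
    (Icc 1 n).map ⟨skip s, skip_injective s⟩ = (Icc 1 (n + 1)).erase s := by
  rw [mem_Icc] at hs
  ext k
  simp only [mem_map, mem_Icc, mem_erase, Function.Embedding.coeFn_mk, skip]
  constructor
  · rintro ⟨j, hj, rfl⟩
    split_ifs <;> omega
  · intro hk
    refine ⟨if k < s then k else k - 1, ?_, ?_⟩ <;> split_ifs <;> omega

theorem map_Icc_succ_eq_cons {α : Type*} (f : ℕ → α) {n s : ℕ} (hs : s ∈ Icc 1 (n + 1)) :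
    (Icc 1 (n + 1)).val.map f = f s ::ₘ (Icc 1 n).val.map (f ∘ skip s) := by
  rw [← Multiset.cons_erase (mem_val.mpr hs), Multiset.map_cons, ← erase_val, ← map_skip_Icc hs,
    map_val, Multiset.map_map]
  rfl

def truncate (n : ℕ) (f : ℕ → ℝ) : ℕ → ℝ := fun m => if 1 ≤ m ∧ m ≤ n then f m else 0

def permPoints (n : ℕ) (lam : ℕ → ℝ) : Set (ℕ → ℝ) :=
  {y | ∃ σ : Equiv.Perm ℕ, (∀ m, ¬(1 ≤ m ∧ m ≤ n) → σ m = m) ∧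
    ∀ m, y m = if 1 ≤ m ∧ m ≤ n then lam (σ m) else 0}

def permutahedron (n : ℕ) (lam : ℕ → ℝ) : Set (ℕ → ℝ) := convexHull ℝ (permPoints n lam)

theorem truncate_mem_permutahedron (n : ℕ) (lam : ℕ → ℝ) :
    truncate n lam ∈ permutahedron n lam :=
  subset_convexHull ℝ _ ⟨1, fun _ _ => rfl, fun _ => rfl⟩

theorem truncate_comp_perm {n : ℕ} {σ : Equiv.Perm ℕ} (hσ : ∀ m, ¬(1 ≤ m ∧ m ≤ n) → σ m = m)
    (f : ℕ → ℝ) : truncate n (f ∘ σ) = truncate n f ∘ σ := by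
  funext m
  simp only [truncate, Function.comp, apply_mem_Icc_iff hσ]

theorem comp_perm_mem_permutahedron {n : ℕ} {lam y : ℕ → ℝ} {τ : Equiv.Perm ℕ}
    (hτ : ∀ m, ¬(1 ≤ m ∧ m ≤ n) → τ m = m) (hy : y ∈ permutahedron n lam) :
    y ∘ τ ∈ permutahedron n lam := by
  refine mapsTo_convexHull (G := (· ∘ τ)) (fun _ _ _ _ _ => rfl) (convex_convexHull ℝ _) ?_ hy
  rintro y ⟨σ, hσ, hy⟩
  refine subset_convexHull ℝ _ ⟨τ.trans σ, fun m hm => ?_, fun m => ?_⟩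
  · simp only [Equiv.trans_apply, hτ m hm, hσ m hm]
  · simp only [Function.comp, hy, Equiv.trans_apply, apply_mem_Icc_iff hτ]

/-- `w` is a convex combination of `y` and `y ∘ swap i j`. -/
theorem mem_permutahedron_of_transfer {n : ℕ} {lam y w : ℕ → ℝ} {i j : ℕ}
    (hy : y ∈ permutahedron n lam) (hi : 1 ≤ i ∧ i ≤ n) (hj : 1 ≤ j ∧ j ≤ n)
    (hsum : w i + w j = y i + y j) (hlo : y j ≤ w i) (hhi : w i ≤ y i)
    (hrest : ∀ k, k ≠ i → k ≠ j → w k = y k) : w ∈ permutahedron n lam := by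
  rcases (hlo.trans hhi).eq_or_lt with hyij | hyij
  · have : w = y := funext fun k => by
      by_cases hki : k = i
      · subst hki; linarith
      by_cases hkj : k = j
      · subst hkj; linarith
      exact hrest k hki hkj
    exact this ▸ hy
  set c := (w i - y j) / (y i - y j)
  have hcd : c * (y i - y j) = w i - y j := div_mul_cancel₀ _ (sub_ne_zero.mpr hyij.ne')
  have hc0 : 0 ≤ c := div_nonneg (sub_nonneg.mpr hlo) (sub_nonneg.mpr hyij.le)
  have hc1 : c ≤ 1 := (div_le_one (sub_pos.mpr hyij)).mpr (by linarith)
  have hswap : ∀ m, ¬(1 ≤ m ∧ m ≤ n) → Equiv.swap i j m = m := fun m hm =>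
    Equiv.swap_apply_of_ne_of_ne (by rintro rfl; exact hm hi) (by rintro rfl; exact hm hj)
  have hw : w = c • y + (1 - c) • (y ∘ Equiv.swap i j) := by
    funext k
    simp only [Pi.add_apply, Pi.smul_apply, Function.comp, smul_eq_mul]
    by_cases hki : k = i
    · subst hki; rw [Equiv.swap_apply_left]; linarith
    by_cases hkj : k = j
    · subst hkj; rw [Equiv.swap_apply_right]; linarith
    rw [Equiv.swap_apply_of_ne_of_ne hki hkj, hrest k hki hkj]; ring
  rw [hw]
  exact convex_convexHull ℝ _ hy (comp_perm_mem_permutahedron hswap hy) hc0 (by linarith)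
    (by ring)

theorem update_mem_permutahedron_succ {n : ℕ} {lam z : ℕ → ℝ} (hz : z ∈ permutahedron n lam) :
    Function.update z (n + 1) (lam (n + 1)) ∈ permutahedron (n + 1) lam := by
  refine mapsTo_convexHull (G := fun z => Function.update z (n + 1) (lam (n + 1)))
    (fun a b c d hcd => ?_) (convex_convexHull ℝ _) ?_ hz
  · funext m
    simp only [Pi.add_apply, Pi.smul_apply, Function.update_apply, smul_eq_mul]
    split_ifs
    · rw [← add_mul, hcd, one_mul]
    · rfl
  · rintro z ⟨σ, hσ, hz⟩
    refine subset_convexHull ℝ _ ⟨σ, fun m hm => hσ m fun h => hm ⟨h.1, by omega⟩, fun m => ?_⟩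
    dsimp only
    rw [Function.update_apply]
    split_ifs with h1 h2 h2
    · subst h1; rw [hσ _ (by omega)]
    · omega
    · rw [hz, if_pos (by omega)]
    · rw [hz, if_neg (by omega)]

/-- Vectors are indexed from `1`: `t` becomes coordinate `1`, and coordinate `k` of `y` becomes
coordinate `k + 1`. -/
def vcons (t : ℝ) (y : ℕ → ℝ) : ℕ → ℝ
  | 0 => 0
  | 1 => t
  | m + 2 => y (m + 1)

theorem vcons_add_smul (t s : ℝ) (y z : ℕ → ℝ) (a b : ℝ) :
    vcons (a * t + b * s) (a • y + b • z) = a • vcons t y + b • vcons s z := by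
  funext m
  rcases m with _ | _ | m <;> simp [vcons]

def liftPerm (σ : Equiv.Perm ℕ) : Equiv.Perm ℕ where
  toFun m := Nat.casesOn m 0 fun k => σ k + 1
  invFun m := Nat.casesOn m 0 fun k => σ.symm k + 1
  left_inv m := by cases m <;> simp
  right_inv m := by cases m <;> simp

theorem liftPerm_apply_of_not_mem {n : ℕ} {σ : Equiv.Perm ℕ}
    (hσ : ∀ m, ¬(1 ≤ m ∧ m ≤ n) → σ m = m) (m : ℕ) (hm : ¬(1 ≤ m ∧ m ≤ n + 1)) :
    liftPerm σ m = m := by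
  rcases m with _ | m
  · rfl
  · exact congrArg (· + 1) (hσ m fun h => hm ⟨by omega, by omega⟩)

theorem vcons_comp {σ : Equiv.Perm ℕ} (hσ : σ 0 = 0) (t : ℝ) (y : ℕ → ℝ) :
    vcons t (y ∘ σ) = vcons t y ∘ liftPerm σ := by
  funext m
  rcases m with _ | _ | m
  · rfl
  · simp [vcons, liftPerm, hσ]
  · have : σ (m + 1) ≠ 0 := fun h => by simpa using σ.injective (h.trans hσ.symm)
    obtain ⟨k, hk⟩ := Nat.exists_eq_succ_of_ne_zero this
    simp [vcons, liftPerm, hk]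

theorem vcons_truncate_comp_skip_one {n : ℕ} {y : ℕ → ℝ}
    (hy : ∀ m, ¬(1 ≤ m ∧ m ≤ n + 1) → y m = 0) : vcons (y 1) (truncate n (y ∘ skip 1)) = y := by
  funext m
  rcases m with _ | _ | m
  · exact (hy 0 (by omega)).symm
  · rfl
  · simp only [vcons, truncate, Function.comp, skip]
    split_ifs with h1 h2
    · omega
    · rfl
    · exact (hy _ (by omega)).symm

def Interlaces (n : ℕ) (lam mu : ℕ → ℝ) : Prop :=
  ∀ j, 1 ≤ j → j ≤ n → lam (j + 1) ≤ mu j ∧ mu j ≤ lam j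

theorem interlaces_comp_skip {n : ℕ} {lam : ℕ → ℝ} (hlam : AntitoneOn lam (Set.Icc 1 (n + 1)))
    (s : ℕ) : Interlaces n lam (lam ∘ skip s) := by
  intro j hj1 hjn
  have hmem : skip s j ∈ Set.Icc 1 (n + 1) := mapsTo_skip s n ⟨hj1, hjn⟩
  have hle : j ≤ skip s j ∧ skip s j ≤ j + 1 := by
    simp only [skip]
    split_ifs <;> omega
  exact ⟨hlam hmem ⟨by omega, by omega⟩ hle.2, hlam ⟨hj1, by omega⟩ hmem hle.1⟩

/-- In the induction step, `μ_{n+1}` is obtained by moving mass `μ_{n+1} - λ_{n+2}` from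
coordinate `1` to coordinate `n + 2`. -/
theorem vcons_truncate_mem_permutahedron {lam mu : ℕ → ℝ} {n : ℕ} (h : Interlaces n lam mu) :
    vcons (∑ j ∈ Icc 1 (n + 1), lam j - ∑ j ∈ Icc 1 n, mu j) (truncate n mu) ∈
      permutahedron (n + 1) lam := by
  induction n with
  | zero =>
    convert truncate_mem_permutahedron 1 lam using 1
    funext m
    rcases m with _ | _ | m <;> simp [vcons, truncate]
  | succ n ih =>
    have hA := update_mem_permutahedron_succ (ih fun j hj1 hjn => h j hj1 (by omega))
    have hlast := h (n + 1) (by omega) le_rfl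
    have hle : ∑ j ∈ Icc 1 (n + 1), mu j ≤ ∑ j ∈ Icc 1 (n + 1), lam j :=
      sum_le_sum fun j hj => (h j (mem_Icc.mp hj).1 (mem_Icc.mp hj).2).2
    have hlam := sum_Icc_succ_top (by omega : 1 ≤ n + 2) lam
    have hmu := sum_Icc_succ_top (by omega : 1 ≤ n + 1) mu
    refine mem_permutahedron_of_transfer hA (i := 1) (j := n + 2) (by omega) (by omega)
      ?_ ?_ ?_ ?_
    all_goals simp only [vcons, truncate, Function.update_self,
      Function.update_of_ne (show 1 ≠ n + 2 by omega), le_refl, and_true, le_add_iff_nonneg_left,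
      zero_le, if_true, true_and]
    · linarith
    · linarith
    · linarith
    · rintro (_ | _ | k) hk1 hk2
      · simp [vcons]
      · contradiction
      · simp only [vcons, truncate, Function.update_apply]
        split_ifs <;> first | rfl | omega

theorem mapsTo_vcons_permutahedron {n : ℕ} {lam mu : ℕ → ℝ} (h : Interlaces n lam mu) :
    Set.MapsTo (vcons (∑ j ∈ Icc 1 (n + 1), lam j - ∑ j ∈ Icc 1 n, mu j))
      (permutahedron n mu) (permutahedron (n + 1) lam) := by
  refine mapsTo_convexHull (fun y z a b hab => ?_) (convex_convexHull ℝ _) ?_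
  · rw [← vcons_add_smul, ← add_mul, hab, one_mul]
  · rintro y ⟨σ, hσ, hy⟩
    obtain rfl : y = truncate n mu ∘ σ := by
      rw [← truncate_comp_perm hσ]
      exact funext hy
    rw [vcons_comp (hσ 0 (by omega))]
    exact comp_perm_mem_permutahedron (liftPerm_apply_of_not_mem hσ)
      (vcons_truncate_mem_permutahedron h)

/-- Row `i` of `x` becomes row `i + 1`, shifted one column to the right, since row `i` of a
pattern starts in column `i`. -/
def consRow (r : ℕ → ℝ) (x : ℕ → ℕ → ℝ) : ℕ → ℕ → ℝ :=
  fun i j => if i = 1 then r j else x (i - 1) (j - 1)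

def dropRow (x : ℕ → ℕ → ℝ) : ℕ → ℕ → ℝ :=
  fun i j => if i = 0 then 0 else x (i + 1) (j + 1)

theorem consRow_dropRow {n : ℕ} {x : ℕ → ℕ → ℝ}
    (hx : ∀ i j, ¬(1 ≤ i ∧ i ≤ j ∧ j ≤ n + 1) → x i j = 0) :
    consRow (x 1) (dropRow x) = x := by
  funext i j
  simp only [consRow, dropRow]
  split_ifs with h1 h0
  · rw [h1]
  · rw [hx i j (by omega)]
  · rw [Nat.sub_add_cancel (by omega : 1 ≤ i)]
    rcases j with _ | j
    · rw [hx i 0 (by omega), hx i 1 (by omega)]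
    · rfl

theorem dropRow_mem_GTpoly {n : ℕ} {lam : ℕ → ℝ} {x : ℕ → ℕ → ℝ} (hx : x ∈ GTpoly (n + 1) lam) :
    dropRow x ∈ GTpoly n (fun j => x 2 (j + 1)) := by
  obtain ⟨hzero, hnonneg, -, hint⟩ := hx
  refine ⟨fun i j hij => ?_, fun i j hi hij hj => ?_, fun j _ _ => ?_, fun i j hi hij hj => ?_⟩
  · simp only [dropRow]
    split_ifs
    · rfl
    · exact hzero _ _ (by omega)
  · simp only [dropRow, if_neg (by omega : i ≠ 0)]
    exact hnonneg _ _ (by omega) (by omega) (by omega)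
  · rfl
  · simp only [dropRow, if_neg (by omega : i ≠ 0), if_neg (by omega : i - 1 ≠ 0),
      Nat.sub_add_cancel (by omega : 1 ≤ i), Nat.sub_add_cancel (by omega : 1 ≤ j)]
    simpa using hint (i + 1) (j + 1) (by omega) (by omega) (by omega)

theorem interlaces_of_mem_GTpoly {n : ℕ} {lam : ℕ → ℝ} {x : ℕ → ℕ → ℝ}
    (hx : x ∈ GTpoly (n + 1) lam) : Interlaces n lam (fun j => x 2 (j + 1)) := by
  intro j hj1 hjn
  have h := hx.2.2.2 2 (j + 1) le_rfl (by omega) (by omega)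
  simp only [Nat.add_one_sub_one, hx.2.2.1 j hj1 (by omega),
    hx.2.2.1 (j + 1) (by omega) (by omega)] at h
  exact ⟨h.2, h.1⟩

theorem consRow_mem_GTpoly {n : ℕ} {lam mu : ℕ → ℝ} {x : ℕ → ℕ → ℝ} (hx : x ∈ GTpoly n mu)
    (hlam : ∀ j ∈ Set.Icc 1 (n + 1), 0 ≤ lam j) (h : Interlaces n lam mu) :
    consRow (truncate (n + 1) lam) x ∈ GTpoly (n + 1) lam := by
  obtain ⟨hzero, hnonneg, htop, hint⟩ := hx
  refine ⟨fun i j hij => ?_, fun i j hi hij hj => ?_, fun j hj1 hjn => ?_, fun i j hi hij hj => ?_⟩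
  · simp only [consRow, truncate]
    split_ifs with h1 h2
    · omega
    · rfl
    · exact hzero _ _ (by omega)
  · simp only [consRow, truncate]
    split_ifs with h1 h2
    · exact hlam j h2
    · exact le_rfl
    · exact hnonneg _ _ (by omega) (by omega) (by omega)
  · simp [consRow, truncate, hj1, hjn]
  · rcases (show i = 2 ∨ 3 ≤ i by omega) with rfl | hi3
    · simp only [consRow, truncate, Nat.add_one_sub_one, if_true, if_neg (by omega : (2 : ℕ) ≠ 1),
        if_pos (⟨by omega, by omega⟩ : 1 ≤ j - 1 ∧ j - 1 ≤ n + 1),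
        if_pos (⟨by omega, hj⟩ : 1 ≤ j ∧ j ≤ n + 1), htop (j - 1) (by omega) (by omega)]
      have := h (j - 1) (by omega) (by omega)
      rw [Nat.sub_add_cancel (by omega : 1 ≤ j)] at this
      exact ⟨this.2, this.1⟩
    · simp only [consRow, if_neg (by omega : i ≠ 1), if_neg (by omega : i - 1 ≠ 1)]
      exact hint (i - 1) (j - 1) (by omega) (by omega) (by omega)

theorem wtMap_consRow (n : ℕ) (r : ℕ → ℝ) (x : ℕ → ℕ → ℝ) :
    wtMap (n + 1) (consRow r x) =
      vcons (∑ j ∈ Icc 1 (n + 1), r j - ∑ j ∈ Icc 1 n, x 1 j) (wtMap n x) := by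
  have shift (i a : ℕ) :
      ∑ j ∈ Icc (a + 1) (n + 1), consRow r x (i + 1 + 1) j = ∑ j ∈ Icc a n, x (i + 1) j := by
    rw [← map_add_right_Icc a n 1, sum_map]
    simp [consRow]
  funext m
  rcases m with _ | _ | m
  · simp [wtMap, vcons]
  · simp only [wtMap, vcons, if_pos (⟨le_rfl, by omega⟩ : 1 ≤ 1 ∧ 1 ≤ n + 1)]
    rw [shift 0 1]
    simp [consRow]
  · simp only [wtMap, vcons, shift]
    split_ifs <;> first | rfl | omega

theorem convex_GTpoly (n : ℕ) (lam : ℕ → ℝ) : Convex ℝ (GTpoly n lam) := by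
  rintro x ⟨hx0, hx1, hx2, hx3⟩ z ⟨hz0, hz1, hz2, hz3⟩ a b ha hb hab
  refine ⟨fun i j h => ?_, fun i j h1 h2 h3 => ?_, fun j h1 h2 => ?_, fun i j h1 h2 h3 => ?_⟩
  all_goals simp only [Pi.add_apply, Pi.smul_apply, smul_eq_mul]
  · simp [hx0 i j h, hz0 i j h]
  · have := hx1 i j h1 h2 h3
    have := hz1 i j h1 h2 h3
    positivity
  · rw [hx2 j h1 h2, hz2 j h1 h2, ← add_mul, hab, one_mul]
  · obtain ⟨hxa, hxb⟩ := hx3 i j h1 h2 h3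
    obtain ⟨hza, hzb⟩ := hz3 i j h1 h2 h3
    constructor <;> gcongr

theorem isLinearMap_wtMap (n : ℕ) : IsLinearMap ℝ (wtMap n) := by
  constructor
  · intro x z
    funext m
    simp only [wtMap, Pi.add_apply, sum_add_distrib]
    split_ifs <;> ring
  · intro c x
    funext m
    simp only [wtMap, Pi.smul_apply, smul_eq_mul, ← mul_sum]
    split_ifs <;> ring

theorem wtMap_mem_permutahedron {n : ℕ} {lam : ℕ → ℝ} {x : ℕ → ℕ → ℝ}
    (hx : x ∈ GTpoly n lam) : wtMap n x ∈ permutahedron n lam := by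
  induction n generalizing lam x with
  | zero =>
    convert truncate_mem_permutahedron 0 lam using 1
    funext m
    simp only [wtMap, truncate]
    split_ifs <;> first | rfl | omega
  | succ n ih =>
    have hsum : ∑ j ∈ Icc 1 (n + 1), x 1 j = ∑ j ∈ Icc 1 (n + 1), lam j :=
      sum_congr rfl fun j hj => hx.2.2.1 j (mem_Icc.mp hj).1 (mem_Icc.mp hj).2
    have hwt : wtMap (n + 1) x = vcons
        (∑ j ∈ Icc 1 (n + 1), lam j - ∑ j ∈ Icc 1 n, x 2 (j + 1)) (wtMap n (dropRow x)) := by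
      conv_lhs => rw [← consRow_dropRow hx.1]
      simp only [wtMap_consRow, hsum, dropRow, one_ne_zero, if_false]
    rw [hwt]
    exact mapsTo_vcons_permutahedron (interlaces_of_mem_GTpoly hx) (ih (dropRow_mem_GTpoly hx))

theorem exists_mem_GTpoly_wtMap_eq {n : ℕ} {lam y : ℕ → ℝ} (hlam : AntitoneOn lam (Set.Icc 1 n))
    (hnonneg : ∀ j ∈ Set.Icc 1 n, 0 ≤ lam j) (hy : ∀ m, ¬(1 ≤ m ∧ m ≤ n) → y m = 0)
    (hperm : (Icc 1 n).val.map y = (Icc 1 n).val.map lam) :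
    ∃ x ∈ GTpoly n lam, wtMap n x = y := by
  induction n generalizing lam y with
  | zero =>
    refine ⟨0, ⟨fun _ _ _ => rfl, fun _ _ _ _ _ => by omega, fun _ _ _ => by omega,
      fun _ _ _ _ _ => by omega⟩, funext fun m => ?_⟩
    simp [wtMap, hy m (by omega)]
  | succ n ih =>
    have hy1 : y 1 ∈ (Icc 1 (n + 1)).val.map lam :=
      hperm ▸ Multiset.mem_map_of_mem y (mem_val.mpr (by simp))
    obtain ⟨s, hs, hsy⟩ := Multiset.mem_map.mp hy1
    have hcons := map_Icc_succ_eq_cons lam hs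
    have hperm' :
        (Icc 1 n).val.map (truncate n (y ∘ skip 1)) = (Icc 1 n).val.map (lam ∘ skip s) := by
      rw [map_Icc_succ_eq_cons y (s := 1) (by simp), hcons, hsy, Multiset.cons_inj_right] at hperm
      rw [← hperm]
      exact Multiset.map_congr rfl fun m hm => if_pos (mem_Icc.mp (mem_val.mp hm))
    obtain ⟨x, hx, hwx⟩ := ih (y := truncate n (y ∘ skip 1))
      (hlam.comp_MonotoneOn ((monotone_skip s).monotoneOn _) (mapsTo_skip s n))
      (fun j hj => hnonneg _ (mapsTo_skip s n hj)) (fun m hm => if_neg hm) hperm'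
    refine ⟨consRow (truncate (n + 1) lam) x,
      consRow_mem_GTpoly hx hnonneg (interlaces_comp_skip hlam s), ?_⟩
    have hsum : ∑ j ∈ Icc 1 (n + 1), truncate (n + 1) lam j - ∑ j ∈ Icc 1 n, x 1 j = y 1 := by
      have h1 : ∑ j ∈ Icc 1 (n + 1), truncate (n + 1) lam j = ∑ j ∈ Icc 1 (n + 1), lam j :=
        sum_congr rfl fun j hj => if_pos (mem_Icc.mp hj)
      have h2 : ∑ j ∈ Icc 1 n, x 1 j = ∑ j ∈ Icc 1 n, (lam ∘ skip s) j :=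
        sum_congr rfl fun j hj => hx.2.2.1 j (mem_Icc.mp hj).1 (mem_Icc.mp hj).2
      have h3 := congrArg Multiset.sum hcons
      rw [Multiset.sum_cons, ← sum_eq_multiset_sum, ← sum_eq_multiset_sum] at h3
      linarith
    rw [wtMap_consRow, hsum, hwx, vcons_truncate_comp_skip_one hy]

theorem image_wtMap_GTpoly {n : ℕ} {lam : ℕ → ℝ} (hlam : AntitoneOn lam (Set.Icc 1 n))
    (hnonneg : ∀ j ∈ Set.Icc 1 n, 0 ≤ lam j) :
    wtMap n '' GTpoly n lam = permutahedron n lam := by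
  refine (Set.image_subset_iff.mpr fun x hx => wtMap_mem_permutahedron hx).antisymm
    (convexHull_min ?_ ((convex_GTpoly n lam).is_linear_image (isLinearMap_wtMap n)))
  rintro y ⟨σ, hσ, hy⟩
  refine exists_mem_GTpoly_wtMap_eq hlam hnonneg (fun m hm => by rw [hy, if_neg hm]) ?_
  rw [← map_Icc_comp_perm hσ lam]
  exact Multiset.map_congr rfl fun m hm => by rw [hy, if_pos (mem_Icc.mp (mem_val.mp hm))]; rfl

end GelfandTsetlin

theorem stmt16_general (n : ℕ) (lam : ℕ → ℤ)
    (hnn : ∀ k, 0 ≤ lam k) (hdec : ∀ k, 1 ≤ k → k < n → lam (k+1) ≤ lam k) :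
    wtMap n '' GTpoly n (fun j => (lam j : ℝ)) =
      convexHull ℝ {y : ℕ → ℝ | ∃ σ : Equiv.Perm ℕ,
        (∀ m, ¬(1 ≤ m ∧ m ≤ n) → σ m = m) ∧
        (∀ m, y m = if 1 ≤ m ∧ m ≤ n then (lam (σ m) : ℝ) else 0)} :=
  GelfandTsetlin.image_wtMap_GTpoly
    (GelfandTsetlin.antitoneOn_Icc_of_succ_le fun k hk1 hkn => by exact_mod_cast hdec k hk1 hkn)
    fun j _ => by exact_mod_cast hnn j

/-- The image of `GT(λ)` under the weight map is the permutahedron `P_λ = Conv(Sₙ·λ)`. -/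
theorem stmt16 (n : ℕ) (hn : 1 ≤ n) (lam : ℕ → ℤ)
    (hnn : ∀ k, 0 ≤ lam k) (hdec : ∀ k, 1 ≤ k → k < n → lam (k+1) ≤ lam k) :
    wtMap n '' GTpoly n (fun j => (lam j : ℝ)) =
      convexHull ℝ {y : ℕ → ℝ | ∃ σ : Equiv.Perm ℕ,
        (∀ m, ¬(1 ≤ m ∧ m ≤ n) → σ m = m) ∧
        (∀ m, y m = if 1 ≤ m ∧ m ≤ n then (lam (σ m) : ℝ) else 0)} :=
  stmt16_general n lam hnn hdec
end
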